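/- arXiv:2110.02732 — 13 statements merged into one kernel-verified Lean document; each statement's English description precedes it below -/
import Mathlib

section
/- Let m ≥ 2, let d₀ = d, d₁, …, d₍m₋₁₎ be positive integers and d_m = 1, and let {(x_i, y_i)}_{i=1}^n ⊆ ℝ^d × {−1,1} be a dataset. Suppose W̃⁽¹⁾, …, W̃⁽ᵐ⁾ are matrices with W̃⁽ˡ⁾ ∈ ℝ^{d_l × d_{l−1}}, and there is a constant C > 0 such that: (i) ‖W̃⁽ˡ⁾‖_F = C for every l ∈ [m]; (ii) the vector ũ ∈ ℝ^d obtained by identifying the 1×d matrix W̃⁽ᵐ⁾⋯W̃⁽¹⁾ with a vector satisfies ‖ũ‖ = C^m; (iii) y_i ⟨ũ, x_i⟩ ≥ 1 for every i ∈ [n]; and (iv) every u ∈ ℝ^d with y_i ⟨u, x_i⟩ ≥ 1 for all i ∈ [n] satisfies ‖u‖ ≥ C^m. Then for every collection of matrices W′⁽¹⁾, …, W′⁽ᵐ⁾ of the same shapes satisfying y_i · (W′⁽ᵐ⁾⋯W′⁽¹⁾ x_i) ≥ 1 for all i ∈ [n], one has ∑_{l=1}^m ‖W′⁽ˡ⁾‖_F²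 ≥ ∑_{l=1}^m ‖W̃⁽ˡ⁾‖_F² = m·C². In other words, θ̃ = [W̃⁽¹⁾,…,W̃⁽ᵐ⁾] is a global optimum of minimizing the squared parameter norm subject to the margin constraints. -/
/-- The product `W⁽ᵏ⁾ ⋯ W⁽¹⁾` of the first `k` layer matrices. -/
def prodUpTo (D : ℕ → ℕ) (W : ∀ l : ℕ, Matrix (Fin (D (l + 1))) (Fin (D l)) ℝ) :
    ∀ k : ℕ, Matrix (Fin (D k)) (Fin (D 0)) ℝ
  | 0 => 1
  | (k + 1) => W k * prodUpTo D W k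

/-- Frobenius squared norm is submultiplicative. -/
lemma sumsq_mul_le {a b c : Type*} [Fintype a] [Fintype b] [Fintype c]
    (A : Matrix a b ℝ) (B : Matrix b c ℝ) :
    ∑ i, ∑ j, ((A * B) i j) ^ 2 ≤ (∑ i, ∑ j, (A i j) ^ 2) * (∑ i, ∑ j, (B i j) ^ 2) := by
  have h1 : ∀ i j, ((A * B) i j) ^ 2 ≤ (∑ k, (A i k) ^ 2) * (∑ k, (B k j) ^ 2) := by
    intro i j
    rw [Matrix.mul_apply]
    exact Finset.sum_mul_sq_le_sq_mul_sq _ _ _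
  calc ∑ i, ∑ j, ((A * B) i j) ^ 2
      ≤ ∑ i, ∑ j, (∑ k, (A i k) ^ 2) * (∑ k, (B k j) ^ 2) := by
        refine Finset.sum_le_sum fun i _ => Finset.sum_le_sum fun j _ => h1 i j
    _ = (∑ i, ∑ j, (A i j) ^ 2) * (∑ i, ∑ j, (B i j) ^ 2) := by
        calc ∑ i, ∑ j, (∑ k, (A i k) ^ 2) * (∑ k, (B k j) ^ 2)
            = ∑ i, (∑ k, (A i k) ^ 2) * (∑ j, ∑ k, (B k j) ^ 2) := by
              refine Finset.sum_congr rfl fun i _ => ?_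
              rw [← Finset.mul_sum]
          _ = (∑ i, ∑ k, (A i k) ^ 2) * (∑ j, ∑ k, (B k j) ^ 2) := by
              rw [← Finset.sum_mul]
          _ = (∑ i, ∑ j, (A i j) ^ 2) * (∑ i, ∑ j, (B i j) ^ 2) := by
              congr 1
              exact Finset.sum_comm

lemma sumsq_prodUpTo_le (D : ℕ → ℕ)
    (W : ∀ l : ℕ, Matrix (Fin (D (l + 1))) (Fin (D l)) ℝ) :
    ∀ k, 1 ≤ k → ∑ i, ∑ j, (prodUpTo D W k i j) ^ 2
      ≤ ∏ l ∈ Finset.range k, ∑ i, ∑ j, (W l i j) ^ 2 := by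
  intro k
  induction k with
  | zero => omega
  | succ k ih =>
    intro _
    rcases Nat.eq_zero_or_pos k with hk | hk
    · subst hk
      show ∑ i, ∑ j, ((W 0 * prodUpTo D W 0) i j) ^ 2 ≤ _
      show _ ≤ ∏ l ∈ Finset.range 1, ∑ i, ∑ j, (W l i j) ^ 2
      simp only [prodUpTo, Matrix.mul_one, Finset.prod_range_one]
      exact le_refl _
    · have h2 := sumsq_mul_le (W k) (prodUpTo D W k)
      have h3 := ih hk
      have hnn : (0 : ℝ) ≤ ∑ i, ∑ j, (W k i j) ^ 2 :=
        Finset.sum_nonneg fun i _ => Finset.sum_nonneg fun j _ => sq_nonneg _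
      calc ∑ i, ∑ j, (prodUpTo D W (k + 1) i j) ^ 2
          ≤ (∑ i, ∑ j, (W k i j) ^ 2) * ∑ i, ∑ j, (prodUpTo D W k i j) ^ 2 := h2
        _ ≤ (∑ i, ∑ j, (W k i j) ^ 2) * ∏ l ∈ Finset.range k, ∑ i, ∑ j, (W l i j) ^ 2 :=
            mul_le_mul_of_nonneg_left h3 hnn
        _ = ∏ l ∈ Finset.range (k + 1), ∑ i, ∑ j, (W l i j) ^ 2 := by
            rw [Finset.prod_range_succ, mul_comm]

/-- AM-GM consequence. -/
lemma amgm_aux (m : ℕ) (hm : 0 < m) (S : ℕ → ℝ) (hS : ∀ l ∈ Finset.range m, 0 ≤ S l)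
    (c : ℝ) (hc : 0 ≤ c) (h : c ^ m ≤ ∏ l ∈ Finset.range m, S l) :
    (m : ℝ) * c ≤ ∑ l ∈ Finset.range m, S l := by
  have hm' : (0 : ℝ) < m := Nat.cast_pos.mpr hm
  have hgeom := Real.geom_mean_le_arith_mean_weighted (Finset.range m)
    (fun _ => (m : ℝ)⁻¹) S (fun i _ => by positivity)
    (by simp [Finset.sum_const]; field_simp) hS
  have hprod : ∏ l ∈ Finset.range m, S l ^ ((m : ℝ)⁻¹ : ℝ)
      = (∏ l ∈ Finset.range m, S l) ^ ((m : ℝ)⁻¹ : ℝ) :=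
    (Real.finset_prod_rpow _ _ hS _)
  have hPnn : (0 : ℝ) ≤ ∏ l ∈ Finset.range m, S l := Finset.prod_nonneg hS
  have hlhs : c ≤ (∏ l ∈ Finset.range m, S l) ^ ((m : ℝ)⁻¹ : ℝ) := by
    have h1 : (c ^ m : ℝ) ^ ((m : ℝ)⁻¹ : ℝ) ≤ (∏ l ∈ Finset.range m, S l) ^ ((m : ℝ)⁻¹ : ℝ) :=
      Real.rpow_le_rpow (by positivity) h (by positivity)
    have h2 : (c ^ m : ℝ) ^ ((m : ℝ)⁻¹ : ℝ) = c := by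
      rw [← Real.rpow_natCast c m, ← Real.rpow_mul hc]
      rw [mul_inv_cancel₀ (ne_of_gt hm'), Real.rpow_one]
    linarith [h1, h2.symm.le]
  have hsum : ∑ l ∈ Finset.range m, (m : ℝ)⁻¹ * S l
      = (m : ℝ)⁻¹ * ∑ l ∈ Finset.range m, S l := by rw [Finset.mul_sum]
  rw [hprod] at hgeom
  rw [hsum] at hgeom
  have := le_trans hlhs hgeom
  calc (m : ℝ) * c ≤ (m : ℝ) * ((m : ℝ)⁻¹ * ∑ l ∈ Finset.range m, S l) :=
        mul_le_mul_of_nonneg_left this hm'.le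
    _ = ∑ l ∈ Finset.range m, S l := by field_simp

/-- at parameters with all layer Frobenius norms equal to `C`, product predictor of
norm `C^m` attaining margin `1` and minimal norm among margin-`1` linear predictors, the squared
parameter norm `m·C²` is a global optimum of the max-margin problem for depth-`m`
fully-connected linear networks. -/
theorem global_optimality_deep_linear_fully_connected
    (m : ℕ) (hm : 2 ≤ m) (D : ℕ → ℕ) (hD : ∀ l, 0 < D l) (hDm : D m = 1)
    (n : ℕ) (x : Fin n → Fin (D 0) → ℝ) (y : Fin n → ℝ)
    (hy : ∀ i, y i = 1 ∨ y i = -1)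
    (Wt : ∀ l : ℕ, Matrix (Fin (D (l + 1))) (Fin (D l)) ℝ)
    (C : ℝ) (hC : 0 < C)
    (hFro : ∀ l < m, Real.sqrt (∑ i, ∑ j, (Wt l i j) ^ 2) = C)
    (hnorm : Real.sqrt (∑ j, (prodUpTo D Wt m ⟨0, hD m⟩ j) ^ 2) = C ^ m)
    (hmargin : ∀ i, y i * ∑ j, prodUpTo D Wt m ⟨0, hD m⟩ j * x i j ≥ 1)
    (hopt : ∀ u : Fin (D 0) → ℝ, (∀ i, y i * ∑ j, u j * x i j ≥ 1) →
      C ^ m ≤ Real.sqrt (∑ j, (u j) ^ 2))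
    (W' : ∀ l : ℕ, Matrix (Fin (D (l + 1))) (Fin (D l)) ℝ)
    (hW' : ∀ i, y i * ∑ j, prodUpTo D W' m ⟨0, hD m⟩ j * x i j ≥ 1) :
    (∑ l ∈ Finset.range m, ∑ i, ∑ j, (W' l i j) ^ 2
        ≥ ∑ l ∈ Finset.range m, ∑ i, ∑ j, (Wt l i j) ^ 2)
      ∧ ∑ l ∈ Finset.range m, ∑ i, ∑ j, (Wt l i j) ^ 2 = (m : ℝ) * C ^ 2 := by
  have hWtS : ∀ l < m, ∑ i, ∑ j, (Wt l i j) ^ 2 = C ^ 2 := by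
    intro l hl
    have hnn : (0 : ℝ) ≤ ∑ i, ∑ j, (Wt l i j) ^ 2 :=
      Finset.sum_nonneg fun i _ => Finset.sum_nonneg fun j _ => sq_nonneg _
    rw [← Real.sq_sqrt hnn, hFro l hl]
  have part2 : ∑ l ∈ Finset.range m, ∑ i, ∑ j, (Wt l i j) ^ 2 = (m : ℝ) * C ^ 2 := by
    rw [Finset.sum_congr rfl fun l hl => hWtS l (Finset.mem_range.mp hl)]
    simp [Finset.sum_const]
  refine ⟨?_, part2⟩
  rw [part2]
  -- the product predictor of W'
  set u' : Fin (D 0) → ℝ := fun j => prodUpTo D W' m ⟨0, hD m⟩ j with hu'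
  have hu'nn : (0 : ℝ) ≤ ∑ j, (u' j) ^ 2 :=
    Finset.sum_nonneg fun j _ => sq_nonneg _
  have h1 : C ^ m ≤ Real.sqrt (∑ j, (u' j) ^ 2) := hopt u' hW'
  have h2 : (C ^ m) ^ 2 ≤ ∑ j, (u' j) ^ 2 := by
    have := pow_le_pow_left₀ (by positivity) h1 2
    rwa [Real.sq_sqrt hu'nn] at this
  -- the double sum over the output index equals the single sum
  have huniq : ∀ i : Fin (D m), i = ⟨0, hD m⟩ := by
    intro i
    have := i.isLt
    ext
    omega
  have h3 : ∑ i, ∑ j, (prodUpTo D W' m i j) ^ 2 = ∑ j, (u' j) ^ 2 := by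
    have hconst : ∀ i : Fin (D m), ∑ j, (prodUpTo D W' m i j) ^ 2 = ∑ j, (u' j) ^ 2 :=
      fun i => by rw [huniq i]
    rw [Finset.sum_congr rfl fun i _ => hconst i, Finset.sum_const, Finset.card_univ, Fintype.card_fin, hDm, one_smul]
  have h4 : ∑ i, ∑ j, (prodUpTo D W' m i j) ^ 2
      ≤ ∏ l ∈ Finset.range m, ∑ i, ∑ j, (W' l i j) ^ 2 :=
    sumsq_prodUpTo_le D W' m (by omega)
  have h5 : (C ^ 2) ^ m ≤ ∏ l ∈ Finset.range m, ∑ i, ∑ j, (W' l i j) ^ 2 := by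
    have : (C ^ 2) ^ m = (C ^ m) ^ 2 := by ring
    rw [this]
    calc (C ^ m) ^ 2 ≤ ∑ j, (u' j) ^ 2 := h2
      _ = ∑ i, ∑ j, (prodUpTo D W' m i j) ^ 2 := h3.symm
      _ ≤ _ := h4
  exact amgm_aux m (by omega) _
    (fun l _ => Finset.sum_nonneg fun i _ => Finset.sum_nonneg fun j _ => sq_nonneg _)
    (C ^ 2) (by positivity) h5
end

section
/- Let n, k ≥ 1, let p₁, …, p_k be positive integers, let z_{i,l} ∈ ℝ^{p_l} for i ∈ [n], l ∈ [k], let y_i ∈ {−1,1}, and let ℓ : ℝ → ℝ be differentiable. Define the empirical loss L(w₁,…,w_k, v) = ∑_{i=1}^n ℓ( y_i ∑_{l=1}^k v_l ⟨w_l, z_{i,l}⟩ ) for w_l ∈ ℝ^{p_l} and v ∈ ℝ^k. Let θ(t) = (w₁(t),…,w_k(t), v(t)) be a differentiable curve satisfying the gradient-flow equation θ′(t) = −∇L(θ(t)) for all t ≥ 0. Then for every j ∈ [k], the function t ↦ ‖w_j(t)‖² − v_j(t)² is constant in t. -/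
open scoped RealInnerProductSpace

private lemma balancedness_key {n k : ℕ} {p : Fin k → ℕ}
    (z : Fin n → (l : Fin k) → Fin (p l) → ℝ)
    (y : Fin n → ℝ)
    (ℓ : ℝ → ℝ) (hℓ : Differentiable ℝ ℓ)
    (L : EuclideanSpace ℝ (((l : Fin k) × Fin (p l)) ⊕ Fin k) → ℝ)
    (hL : ∀ ψ, L ψ = ∑ i, ℓ (y i * ∑ l, ψ (Sum.inr l) * ∑ r, ψ (Sum.inl ⟨l, r⟩) * z i l r))
    (j : Fin k) (ψ : EuclideanSpace ℝ (((l : Fin k) × Fin (p l)) ⊕ Fin k)) :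
    (∑ r, ψ (Sum.inl ⟨j, r⟩) * gradient L ψ (Sum.inl ⟨j, r⟩))
      - ψ (Sum.inr j) * gradient L ψ (Sum.inr j) = 0 := by
  classical
  have hcoord : ∀ c, Differentiable ℝ (fun φ : EuclideanSpace ℝ (((l : Fin k) × Fin (p l)) ⊕ Fin k) => φ c) :=
    fun c => (EuclideanSpace.proj (𝕜 := ℝ) c).differentiable
  have hdiffL : Differentiable ℝ L := by
    rw [funext hL]
    refine Differentiable.fun_sum fun i _ => hℓ.comp ?_
    refine Differentiable.const_mul (Differentiable.fun_sum fun l _ => ?_) _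
    exact (hcoord _).mul (Differentiable.fun_sum fun r _ => (hcoord _).mul_const _)
  set u : EuclideanSpace ℝ (((l : Fin k) × Fin (p l)) ⊕ Fin k) :=
    WithLp.toLp 2 (Sum.elim (fun q => if q.1 = j then ψ (Sum.inl q) else 0)
      (fun l => if l = j then -ψ (Sum.inr l) else 0)) with hu
  have hcoords : ∀ t : ℝ, ∀ c, (ψ + t • u) c = ψ c + t * u c := by
    intro t c; simp [PiLp.add_apply, PiLp.smul_apply, smul_eq_mul]
  set T : Fin n → ℝ := fun i => ψ (Sum.inr j) * ∑ r, ψ (Sum.inl ⟨j, r⟩) * z i j r with hT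
  set C : Fin n → ℝ := fun i =>
    ∑ l ∈ Finset.univ.erase j, ψ (Sum.inr l) * ∑ r, ψ (Sum.inl ⟨l, r⟩) * z i l r with hC
  have hline : ∀ t : ℝ, L (ψ + t • u) = ∑ i, ℓ (y i * ((1 - t ^ 2) * T i + C i)) := by
    intro t
    rw [hL]
    refine Finset.sum_congr rfl fun i _ => ?_
    congr 1
    congr 1
    rw [← Finset.add_sum_erase _ _ (Finset.mem_univ j)]
    have h1 : ∀ l ∈ Finset.univ.erase j,
        (ψ + t • u) (Sum.inr l) * ∑ r, (ψ + t • u) (Sum.inl ⟨l, r⟩) * z i l r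
          = ψ (Sum.inr l) * ∑ r, ψ (Sum.inl ⟨l, r⟩) * z i l r := by
      intro l hl
      have hlj : l ≠ j := Finset.ne_of_mem_erase hl
      simp only [hcoords, hu, PiLp.toLp_apply, PiLp.add_apply, PiLp.smul_apply, smul_eq_mul, Sum.elim_inl, Sum.elim_inr, if_neg hlj, mul_zero, add_zero]
    rw [Finset.sum_congr rfl h1]
    have h2 : (ψ + t • u) (Sum.inr j) * ∑ r, (ψ + t • u) (Sum.inl ⟨j, r⟩) * z i j r
        = (1 - t ^ 2) * T i := by
      simp only [hcoords, hu, PiLp.toLp_apply, PiLp.add_apply, PiLp.smul_apply, smul_eq_mul, Sum.elim_inl, Sum.elim_inr, if_pos rfl, hT,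
        Finset.mul_sum, Finset.sum_mul]
      refine Finset.sum_congr rfl fun r _ => ?_
      simp only [if_true]
      ring
    rw [h2, hC]
  -- the explicit curve has derivative 0 at t = 0
  have hcurve : HasDerivAt (fun t : ℝ => ∑ i, ℓ (y i * ((1 - t ^ 2) * T i + C i))) 0 0 := by
    have h0 : HasDerivAt (fun t : ℝ => (1 - t ^ 2)) 0 0 := by
      simpa using ((hasDerivAt_pow 2 (0:ℝ)).const_sub 1)
    have hsum : ∀ i : Fin n, HasDerivAt (fun t : ℝ => ℓ (y i * ((1 - t ^ 2) * T i + C i)))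
        (deriv ℓ (y i * ((1 - 0 ^ 2) * T i + C i)) * (y i * (0 * T i))) 0 := by
      intro i
      have hin : HasDerivAt (fun t : ℝ => y i * ((1 - t ^ 2) * T i + C i))
          (y i * (0 * T i)) 0 := (((h0.mul_const (T i)).add_const (C i)).const_mul (y i))
      exact ((hℓ _).hasDerivAt).comp 0 hin
    have := HasDerivAt.fun_sum (u := Finset.univ) (fun i _ => hsum i)
    simpa using this
  -- the line through ψ in direction u
  have hlinederiv : HasDerivAt (fun t : ℝ => ψ + t • u) u 0 := by
    simpa using (((hasDerivAt_id (0:ℝ)).smul_const u).const_add ψ)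
  have hcomp : HasDerivAt (fun t : ℝ => L (ψ + t • u)) (fderiv ℝ L ψ u) 0 := by
    have hF : HasFDerivAt L (fderiv ℝ L ψ) ((fun t : ℝ => ψ + t • u) 0) := by
      simpa using (hdiffL ψ).hasFDerivAt
    exact hF.comp_hasDerivAt 0 hlinederiv
  have hfd : fderiv ℝ L ψ u = 0 := by
    have heq : (fun t : ℝ => L (ψ + t • u)) = fun t : ℝ => ∑ i, ℓ (y i * ((1 - t ^ 2) * T i + C i)) :=
      funext hline
    rw [heq] at hcomp
    exact hcomp.unique hcurve
  -- gradient pairing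
  have hgrad : (inner ℝ (gradient L ψ) u : ℝ) = fderiv ℝ L ψ u := by
    rw [gradient]
    exact InnerProductSpace.toDual_symm_apply
  rw [hfd] at hgrad
  -- expand the inner product
  rw [PiLp.inner_apply] at hgrad
  simp only [RCLike.inner_apply, conj_trivial] at hgrad
  rw [Fintype.sum_sum_type] at hgrad
  rw [← Finset.univ_sigma_univ, Finset.sum_sigma] at hgrad
  simp only [hu, PiLp.toLp_apply, Sum.elim_inl, Sum.elim_inr, mul_ite, mul_zero, mul_neg, ite_mul, zero_mul, neg_mul, Finset.sum_ite_eq,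
    Finset.sum_ite_irrel, Finset.sum_const_zero, Finset.sum_ite_eq', Finset.mem_univ,
    if_true] at hgrad
  have hgoal : ∑ r, ψ (Sum.inl ⟨j, r⟩) * gradient L ψ (Sum.inl ⟨j, r⟩)
      = ∑ r, gradient L ψ (Sum.inl ⟨j, r⟩) * ψ (Sum.inl ⟨j, r⟩) :=
    Finset.sum_congr rfl fun r _ => mul_comm _ _
  rw [hgoal, mul_comm]
  linarith [hgrad]



/-- along gradient flow on the empirical loss of a depth-2 linear network in
`𝒩_no-share`, the quantity `‖w_j(t)‖² − v_j(t)²` is conserved for every hidden neuron `j`.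
Parameters are flattened into `EuclideanSpace ℝ ((Σ l, Fin (p l)) ⊕ Fin k)`: coordinate
`Sum.inl ⟨l, r⟩` is the `r`-th incoming weight of neuron `l`, and `Sum.inr l` is its outgoing
weight `v_l`. -/
theorem balancedness_gradient_flow_depth2
    (n k : ℕ) (hn : 1 ≤ n) (hk : 1 ≤ k) (p : Fin k → ℕ) (hp : ∀ l, 1 ≤ p l)
    (z : Fin n → (l : Fin k) → Fin (p l) → ℝ)
    (y : Fin n → ℝ) (hy : ∀ i, y i = 1 ∨ y i = -1)
    (ℓ : ℝ → ℝ) (hℓ : Differentiable ℝ ℓ)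
    (L : EuclideanSpace ℝ (((l : Fin k) × Fin (p l)) ⊕ Fin k) → ℝ)
    (hL : ∀ ψ, L ψ = ∑ i, ℓ (y i * ∑ l, ψ (Sum.inr l) * ∑ r, ψ (Sum.inl ⟨l, r⟩) * z i l r))
    (θ : ℝ → EuclideanSpace ℝ (((l : Fin k) × Fin (p l)) ⊕ Fin k))
    (hflow : ∀ t : ℝ, 0 ≤ t → HasDerivAt θ (-(gradient L (θ t))) t)
    (j : Fin k) (s t : ℝ) (hs : 0 ≤ s) (ht : 0 ≤ t) :
    (∑ r, (θ s (Sum.inl ⟨j, r⟩)) ^ 2) - (θ s (Sum.inr j)) ^ 2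
      = (∑ r, (θ t (Sum.inl ⟨j, r⟩)) ^ 2) - (θ t (Sum.inr j)) ^ 2 := by
  classical
  set g : ℝ → ℝ := fun τ => (∑ r, (θ τ (Sum.inl ⟨j, r⟩)) ^ 2) - (θ τ (Sum.inr j)) ^ 2 with hgdef
  have hg : ∀ τ : ℝ, 0 ≤ τ → HasDerivAt g 0 τ := by
    intro τ hτ
    have hθc : ∀ c, HasDerivAt (fun t => θ t c) (-(gradient L (θ τ) c)) τ := by
      intro c
      have := (EuclideanSpace.proj c).hasFDerivAt.comp_hasDerivAt τ (hflow τ hτ)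
      exact this
    have hkey := balancedness_key z y ℓ hℓ L hL j (θ τ)
    have hD : (∑ r, 2 * θ τ (Sum.inl ⟨j, r⟩) ^ 1 * -(gradient L (θ τ) (Sum.inl ⟨j, r⟩)))
        - 2 * θ τ (Sum.inr j) ^ 1 * -(gradient L (θ τ) (Sum.inr j)) = 0 := by
      have e1 : (∑ r, 2 * θ τ (Sum.inl ⟨j, r⟩) ^ 1 * -(gradient L (θ τ) (Sum.inl ⟨j, r⟩)))
          = (-2) * ∑ r, θ τ (Sum.inl ⟨j, r⟩) * gradient L (θ τ) (Sum.inl ⟨j, r⟩) := by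
        rw [Finset.mul_sum]
        exact Finset.sum_congr rfl fun r _ => by ring
      rw [e1]
      linear_combination (-2 : ℝ) * hkey
    have hder : HasDerivAt g
        ((∑ r, 2 * θ τ (Sum.inl ⟨j, r⟩) ^ 1 * -(gradient L (θ τ) (Sum.inl ⟨j, r⟩)))
          - 2 * θ τ (Sum.inr j) ^ 1 * -(gradient L (θ τ) (Sum.inr j))) τ := by
      exact (HasDerivAt.fun_sum fun r _ => (hθc (Sum.inl ⟨j, r⟩)).pow 2).sub
        ((hθc (Sum.inr j)).pow 2)
    rwa [hD] at hder
  have main : ∀ a b : ℝ, 0 ≤ a → a ≤ b → g b = g a := by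
    intro a b ha hab
    have hc : ContinuousOn g (Set.Icc a b) := fun x hx =>
      ((hg x (ha.trans hx.1)).continuousAt).continuousWithinAt
    exact constant_of_has_deriv_right_zero hc
      (fun x hx => (hg x (ha.trans hx.1)).hasDerivWithinAt) b (Set.right_mem_Icc.2 hab)
  rcases le_total s t with h | h
  · exact (main s t hs h).symm
  · exact main t s ht h
end

section
/- Let n, k ≥ 1, z_{i,l} ∈ ℝ^{p_l}, y_i ∈ {−1,1}, and ℓ : ℝ → ℝ differentiable, with L(w₁,…,w_k, v) = ∑_{i=1}^n ℓ( y_i ∑_{l=1}^k v_l ⟨w_l, z_{i,l}⟩ ). Let θ(t) = (w₁(t),…,w_k(t), v(t)) be a differentiable curve satisfying θ′(t) = −∇L(θ(t)) for all t ≥ 0. Assume that ‖θ(t)‖ → ∞ as t → ∞ and that θ(t)/‖θ(t)‖ converges as t → ∞ to a limit θ̄ = (w̄₁,…,w̄_k, v̄). Then for every l ∈ [k], ‖w̄_l‖ = |v̄_l|. -/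
open Filter

theorem euler_identity {k n : ℕ} {p : Fin k → ℕ}
    (z : Fin n → (l : Fin k) → Fin (p l) → ℝ) (y : Fin n → ℝ)
    (ℓ : ℝ → ℝ)
    (L : EuclideanSpace ℝ (((l : Fin k) × Fin (p l)) ⊕ Fin k) → ℝ)
    (hL : ∀ ψ, L ψ = ∑ i, ℓ (y i * ∑ l, ψ (Sum.inr l) * ∑ r, ψ (Sum.inl ⟨l, r⟩) * z i l r))
    (hdiff : Differentiable ℝ L)
    (ψ : EuclideanSpace ℝ (((l : Fin k) × Fin (p l)) ⊕ Fin k)) (l : Fin k) :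
    ∑ r, ψ (Sum.inl ⟨l, r⟩) * (gradient L ψ) (Sum.inl ⟨l, r⟩)
      = ψ (Sum.inr l) * (gradient L ψ) (Sum.inr l) := by
  classical
  set draw : (((l : Fin k) × Fin (p l)) ⊕ Fin k) → ℝ := fun c => match c with
    | Sum.inl s => if s.1 = l then ψ (Sum.inl s) else 0
    | Sum.inr l' => if l' = l then -ψ (Sum.inr l') else 0 with hdraw
  set d : EuclideanSpace ℝ (((l : Fin k) × Fin (p l)) ⊕ Fin k) :=
    (WithLp.equiv 2 _).symm draw with hd
  set craw : ℝ → (((l : Fin k) × Fin (p l)) ⊕ Fin k) → ℝ := fun s c => match c with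
    | Sum.inl s' => if s'.1 = l then Real.exp s * ψ (Sum.inl s') else ψ (Sum.inl s')
    | Sum.inr l' => if l' = l then Real.exp (-s) * ψ (Sum.inr l') else ψ (Sum.inr l') with hcraw
  set c : ℝ → EuclideanSpace ℝ (((l : Fin k) × Fin (p l)) ⊕ Fin k) :=
    fun s => (WithLp.equiv 2 _).symm (craw s) with hc
  have hceval : ∀ s i, c s i = craw s i := fun s i => rfl
  have hdeval : ∀ i, d i = draw i := fun i => rfl
  have hc0 : c 0 = ψ := by
    apply PiLp.ext
    intro i
    rw [hceval]
    cases i with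
    | inl s => by_cases h : s.1 = l <;> simp [hcraw, h]
    | inr l' =>
      by_cases h : l' = l
      · subst h; simp [hcraw]
      · simp [hcraw, h]
  have hcderiv : HasDerivAt c d 0 := by
    have hr : HasDerivAt craw draw 0 := by
      rw [hasDerivAt_pi]
      intro i
      cases i with
      | inl s =>
        by_cases h : s.1 = l
        · have := (Real.hasDerivAt_exp 0).mul_const (ψ (Sum.inl s))
          simp only [Real.exp_zero, one_mul] at this
          simpa [hcraw, hdraw, h] using this
        · simpa [hcraw, hdraw, h] using (hasDerivAt_const (0:ℝ) (ψ (Sum.inl s)))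
      | inr l' =>
        by_cases h : l' = l
        · subst h
          have h1 : HasDerivAt (fun s : ℝ => Real.exp (-s)) (-1) 0 := by
            simpa [Function.comp_def] using (Real.hasDerivAt_exp (-(0:ℝ))).comp 0 ((hasDerivAt_id (0:ℝ)).neg)
          have h2 := h1.mul_const (ψ (Sum.inr l'))
          simp only [neg_one_mul] at h2
          simpa [hcraw, hdraw] using h2
        · simpa [hcraw, hdraw, h] using (hasDerivAt_const (0:ℝ) (ψ (Sum.inr l')))
    exact ((PiLp.continuousLinearEquiv 2 ℝ _).symm.hasFDerivAt.comp_hasDerivAt 0 hr)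
  have hconst : ∀ s, L (c s) = L ψ := by
    intro s
    rw [hL, hL]
    apply Finset.sum_congr rfl
    intro i _
    congr 1
    congr 1
    apply Finset.sum_congr rfl
    intro l' _
    rw [hceval]
    by_cases h : l' = l
    · subst h
      simp only [hcraw, if_true]
      rw [Finset.mul_sum, Finset.mul_sum]
      apply Finset.sum_congr rfl
      intro r _
      rw [hceval]
      simp only [hcraw, if_true]
      have hexp : Real.exp (-s) * Real.exp s = 1 := by rw [← Real.exp_add]; simp
      linear_combination (ψ (Sum.inr l') * ψ (Sum.inl ⟨l', r⟩) * z i l' r) * hexp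
    · simp only [hcraw, if_neg h]
      congr 1
      apply Finset.sum_congr rfl
      intro r _
      rw [hceval]
      simp only [hcraw]
      rw [if_neg (by simpa using h)]
  have hchain : HasDerivAt (L ∘ c) (fderiv ℝ L ψ d) 0 := by
    exact HasFDerivAt.comp_hasDerivAt 0 (by rw [hc0]; exact (hdiff ψ).hasFDerivAt) hcderiv
  have hzero : fderiv ℝ L ψ d = 0 := by
    have hLC : (L ∘ c) = fun _ => L ψ := funext fun s => hconst s
    have h0 : HasDerivAt (L ∘ c) 0 0 := by rw [hLC]; exact hasDerivAt_const _ _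
    exact hchain.unique h0
  have hfd : HasFDerivAt L ((InnerProductSpace.toDual ℝ _) (gradient L ψ)) ψ :=
    hasGradientAt_iff_hasFDerivAt.mp (hdiff ψ).hasGradientAt
  have hinner : (inner ℝ (gradient L ψ) d : ℝ) = 0 := by
    rw [← InnerProductSpace.toDual_apply_apply, ← hfd.fderiv, hzero]
  rw [PiLp.inner_apply] at hinner
  simp only [RCLike.inner_apply', starRingEnd_apply, star_trivial] at hinner
  rw [Fintype.sum_sum_type] at hinner
  have hinl : ∑ s : (l : Fin k) × Fin (p l), (gradient L ψ) (Sum.inl s) * d (Sum.inl s)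
      = ∑ r, (gradient L ψ) (Sum.inl ⟨l, r⟩) * ψ (Sum.inl ⟨l, r⟩) := by
    rw [← Finset.univ_sigma_univ, Finset.sum_sigma]
    have : ∀ l' : Fin k, ∑ r : Fin (p l'),
        (gradient L ψ) (Sum.inl ⟨l', r⟩) * d (Sum.inl ⟨l', r⟩)
        = if l' = l then ∑ r, (gradient L ψ) (Sum.inl ⟨l, r⟩) * ψ (Sum.inl ⟨l, r⟩) else 0 := by
      intro l'
      by_cases h : l' = l
      · subst h
        rw [if_pos rfl]
        apply Finset.sum_congr rfl
        intro r _
        rw [hdeval]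
        simp [hdraw]
      · rw [if_neg h]
        apply Finset.sum_eq_zero
        intro r _
        rw [hdeval]
        simp only [hdraw]
        rw [if_neg (by simpa using h), mul_zero]
    rw [Finset.sum_congr rfl (fun l' _ => this l')]
    simp
  have hinr : ∑ l' : Fin k, (gradient L ψ) (Sum.inr l') * d (Sum.inr l')
      = -((gradient L ψ) (Sum.inr l) * ψ (Sum.inr l)) := by
    have : ∀ l' : Fin k, (gradient L ψ) (Sum.inr l') * d (Sum.inr l')
        = if l' = l then -((gradient L ψ) (Sum.inr l) * ψ (Sum.inr l)) else 0 := by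
      intro l'
      by_cases h : l' = l
      · subst h
        rw [if_pos rfl, hdeval]
        simp [hdraw]
      · rw [if_neg h, hdeval]
        simp only [hdraw]
        rw [if_neg h, mul_zero]
    rw [Finset.sum_congr rfl (fun l' _ => this l')]
    simp
  rw [hinl, hinr] at hinner
  have := sub_eq_zero.mpr (eq_of_sub_eq_zero (by linarith : _ - _ = (0:ℝ)))
  calc ∑ r, ψ (Sum.inl ⟨l, r⟩) * (gradient L ψ) (Sum.inl ⟨l, r⟩)
      = ∑ r, (gradient L ψ) (Sum.inl ⟨l, r⟩) * ψ (Sum.inl ⟨l, r⟩) := by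
        exact Finset.sum_congr rfl fun r _ => mul_comm _ _
    _ = (gradient L ψ) (Sum.inr l) * ψ (Sum.inr l) := by linarith
    _ = ψ (Sum.inr l) * (gradient L ψ) (Sum.inr l) := mul_comm _ _

/-- if gradient flow on the empirical loss of a depth-2 linear network in
`𝒩_no-share` has `‖θ(t)‖ → ∞` and `θ(t)/‖θ(t)‖ → θ̄`, then the limit direction `θ̄` is balanced:
`‖w̄_l‖ = |v̄_l|` for every hidden neuron `l`.  Parameters are flattened into
`EuclideanSpace ℝ ((Σ l, Fin (p l)) ⊕ Fin k)`: coordinate `Sum.inl ⟨l, r⟩` is the `r`-th incoming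
weight of neuron `l`, and `Sum.inr l` is its outgoing weight `v_l`. -/
theorem balanced_limit_direction_depth2
    (n k : ℕ) (hn : 1 ≤ n) (hk : 1 ≤ k) (p : Fin k → ℕ) (hp : ∀ l, 1 ≤ p l)
    (z : Fin n → (l : Fin k) → Fin (p l) → ℝ)
    (y : Fin n → ℝ) (hy : ∀ i, y i = 1 ∨ y i = -1)
    (ℓ : ℝ → ℝ) (hℓ : Differentiable ℝ ℓ)
    (L : EuclideanSpace ℝ (((l : Fin k) × Fin (p l)) ⊕ Fin k) → ℝ)
    (hL : ∀ ψ, L ψ = ∑ i, ℓ (y i * ∑ l, ψ (Sum.inr l) * ∑ r, ψ (Sum.inl ⟨l, r⟩) * z i l r))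
    (θ : ℝ → EuclideanSpace ℝ (((l : Fin k) × Fin (p l)) ⊕ Fin k))
    (hflow : ∀ t : ℝ, 0 ≤ t → HasDerivAt θ (-(gradient L (θ t))) t)
    (hinfty : Tendsto (fun t => ‖θ t‖) atTop atTop)
    (θbar : EuclideanSpace ℝ (((l : Fin k) × Fin (p l)) ⊕ Fin k))
    (hdir : Tendsto (fun t => ‖θ t‖⁻¹ • θ t) atTop (nhds θbar))
    (l : Fin k) :
    Real.sqrt (∑ r, (θbar (Sum.inl ⟨l, r⟩)) ^ 2) = |θbar (Sum.inr l)| := by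
  classical
  -- differentiability of L
  have hdiffL : Differentiable ℝ L := by
    have hfun : L = fun ψ : EuclideanSpace ℝ (((l : Fin k) × Fin (p l)) ⊕ Fin k) =>
        ∑ i, ℓ (y i * ∑ l, ψ (Sum.inr l) * ∑ r, ψ (Sum.inl ⟨l, r⟩) * z i l r) := funext hL
    rw [hfun]
    have hproj : ∀ c : ((l : Fin k) × Fin (p l)) ⊕ Fin k,
        Differentiable ℝ (fun ψ : EuclideanSpace ℝ (((l : Fin k) × Fin (p l)) ⊕ Fin k) => ψ c) :=
      fun c => (EuclideanSpace.proj (𝕜 := ℝ) c).differentiable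
    apply Differentiable.fun_sum
    intro i _
    apply hℓ.comp
    apply Differentiable.const_mul
    apply Differentiable.fun_sum
    intro l _
    exact (hproj _).mul (Differentiable.fun_sum fun r _ => (hproj _).mul_const _)
  -- coordinate derivatives along the flow
  have hcoord : ∀ (c : ((l : Fin k) × Fin (p l)) ⊕ Fin k) (t : ℝ), 0 ≤ t →
      HasDerivAt (fun t => θ t c) (-(gradient L (θ t) c)) t := by
    intro c t ht
    have h := (EuclideanSpace.proj (𝕜 := ℝ) c).hasFDerivAt.comp_hasDerivAt t (hflow t ht)
    simpa [Function.comp_def] using h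
  set g : ℝ → ℝ := fun t => (∑ r, (θ t (Sum.inl ⟨l, r⟩))^2) - (θ t (Sum.inr l))^2 with hgdef
  have hg : ∀ t, 0 ≤ t → HasDerivAt g 0 t := by
    intro t ht
    have h1 : HasDerivAt (fun t => ∑ r, (θ t (Sum.inl ⟨l, r⟩))^2)
        (∑ r, (2:ℝ) * θ t (Sum.inl ⟨l, r⟩) ^ 1 * (-(gradient L (θ t) (Sum.inl ⟨l, r⟩)))) t :=
      HasDerivAt.fun_sum fun r _ => (hcoord (Sum.inl ⟨l, r⟩) t ht).pow 2
    have h2 : HasDerivAt (fun t => (θ t (Sum.inr l))^2)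
        ((2:ℝ) * θ t (Sum.inr l) ^ 1 * (-(gradient L (θ t) (Sum.inr l)))) t :=
      (hcoord (Sum.inr l) t ht).pow 2
    have h3 := h1.sub h2
    have he := euler_identity z y ℓ L hL hdiffL (θ t) l
    have hD : (∑ r, (2:ℝ) * θ t (Sum.inl ⟨l, r⟩) ^ 1 * (-(gradient L (θ t) (Sum.inl ⟨l, r⟩))))
        - (2:ℝ) * θ t (Sum.inr l) ^ 1 * (-(gradient L (θ t) (Sum.inr l))) = 0 := by
      have hsum : ∑ r, (2:ℝ) * θ t (Sum.inl ⟨l, r⟩) ^ 1 * (-(gradient L (θ t) (Sum.inl ⟨l, r⟩)))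
          = -2 * ∑ r, θ t (Sum.inl ⟨l, r⟩) * gradient L (θ t) (Sum.inl ⟨l, r⟩) := by
        rw [Finset.mul_sum]
        exact Finset.sum_congr rfl fun r _ => by ring
      rw [hsum, he]; ring
    rw [hD] at h3
    exact h3
  -- g is constant on [0, ∞)
  have hgconst : ∀ t, 0 ≤ t → g t = g 0 := by
    intro t ht
    rcases eq_or_lt_of_le ht with h | h
    · rw [← h]
    · exact constant_of_has_deriv_right_zero
        (fun x hx => (hg x hx.1).continuousAt.continuousWithinAt)
        (fun x hx => (hg x hx.1).hasDerivWithinAt)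
        t ⟨ht, le_refl t⟩
  -- limit of g t / ‖θ t‖² along two routes
  have hsqinf : Tendsto (fun t => ‖θ t‖^2) atTop atTop := by
    simpa [pow_two] using hinfty.atTop_mul_atTop₀ hinfty
  have hA : Tendsto (fun t => g t / ‖θ t‖^2) atTop (nhds 0) := by
    have h0 : Tendsto (fun t => g 0 * (‖θ t‖^2)⁻¹) atTop (nhds 0) := by
      have := tendsto_const_nhds (x := g 0) (f := atTop (α := ℝ)) |>.mul
        (tendsto_inv_atTop_zero.comp hsqinf)
      simpa using this
    apply h0.congr'
    filter_upwards [eventually_ge_atTop (0:ℝ)] with t ht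
    rw [hgconst t ht, div_eq_mul_inv]
  have hcoordlim : ∀ c : ((l : Fin k) × Fin (p l)) ⊕ Fin k,
      Tendsto (fun t => ‖θ t‖⁻¹ * θ t c) atTop (nhds (θbar c)) := by
    intro c
    have := ((EuclideanSpace.proj (𝕜 := ℝ) c).continuous.tendsto θbar).comp hdir
    simpa [Function.comp_def] using this
  have hB : Tendsto (fun t => (∑ r, (‖θ t‖⁻¹ * θ t (Sum.inl ⟨l, r⟩))^2)
        - (‖θ t‖⁻¹ * θ t (Sum.inr l))^2) atTop
      (nhds ((∑ r, (θbar (Sum.inl ⟨l, r⟩))^2) - (θbar (Sum.inr l))^2)) :=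
    (tendsto_finset_sum _ fun r _ => (hcoordlim (Sum.inl ⟨l, r⟩)).pow 2).sub
      ((hcoordlim (Sum.inr l)).pow 2)
  have hAB : Tendsto (fun t => g t / ‖θ t‖^2) atTop
      (nhds ((∑ r, (θbar (Sum.inl ⟨l, r⟩))^2) - (θbar (Sum.inr l))^2)) := by
    apply hB.congr'
    filter_upwards [hinfty.eventually_ge_atTop 1] with t ht
    have hne : ‖θ t‖ ≠ 0 := by positivity
    have hterm : ∀ a : ℝ, (‖θ t‖⁻¹ * a)^2 = a^2 / ‖θ t‖^2 := by
      intro a; rw [mul_pow]; field_simp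
    simp only [hterm]
    rw [← Finset.sum_div, ← sub_div]
  have hkey : (∑ r, (θbar (Sum.inl ⟨l, r⟩))^2) - (θbar (Sum.inr l))^2 = 0 :=
    (tendsto_nhds_unique hAB hA)
  rw [sub_eq_zero] at hkey
  rw [hkey, Real.sqrt_sq_eq_abs]
end

section
/- Define Φ(θ; x) = v₁·max(0, ⟨w₁, x⟩) + v₂·max(0, ⟨w₂, x⟩) for θ = (w₁, w₂, v₁, v₂) ∈ ℝ²×ℝ²×ℝ×ℝ and x ∈ ℝ². Consider the dataset x₁ = (1, 1/4), x₂ = (−1, 1/4) with y₁ = y₂ = 1, and let θ̃ = (w̃₁, w̃₂, ṽ₁, ṽ₂) with w̃₁ = (0, 2), ṽ₁ = 2, w̃₂ = (0, 0), ṽ₂ = 0. Then: (a) Φ(θ̃; x₁) = Φ(θ̃; x₂) = 1, so θ̃ is feasible for the maximum-margin problem; and (b) θ̃ is not a local optimum: for every ε ∈ (0, 1) there exists θ′ with ‖θ′ − θ̃‖ ≤ ε, Φ(θ′; x_i) ≥ 1 for i = 1, 2, and ‖θ′‖ < ‖θ̃‖ = 2√2. -/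
/-- Depth-2 fully-connected ReLU network with two hidden neurons, input dimension 2:
`Φ(θ; x) = v₁·max(0,⟨w₁,x⟩) + v₂·max(0,⟨w₂,x⟩)`, written with explicit coordinates. -/
def reluNet2 (w11 w12 w21 w22 v1 v2 x1 x2 : ℝ) : ℝ :=
  v1 * max 0 (w11 * x1 + w12 * x2) + v2 * max 0 (w21 * x1 + w22 * x2)

lemma sqrt8_eq : Real.sqrt 8 = 2 * Real.sqrt 2 := by
  rw [show (8:ℝ) = 2^2 * 2 by norm_num, Real.sqrt_mul (by positivity),
    Real.sqrt_sq (by norm_num : (0:ℝ) ≤ 2)]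

/-- for the dataset `x₁ = (1, 1/4)`, `x₂ = (−1, 1/4)`, `y₁ = y₂ = 1`, the point
`θ̃ = (w̃₁,w̃₂,ṽ₁,ṽ₂)` with `w̃₁ = (0,2)`, `ṽ₁ = 2`, `w̃₂ = 0`, `ṽ₂ = 0` is feasible with margin
exactly `1` but is not a local optimum of the max-margin problem. -/
theorem relu_fc_kkt_not_local_optimum :
    (reluNet2 0 2 0 0 2 0 1 (1/4) = 1 ∧ reluNet2 0 2 0 0 2 0 (-1) (1/4) = 1)
    ∧ Real.sqrt (0 ^ 2 + 2 ^ 2 + 0 ^ 2 + 0 ^ 2 + 2 ^ 2 + 0 ^ 2) = 2 * Real.sqrt 2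
    ∧ ∀ ε : ℝ, 0 < ε → ε < 1 →
        ∃ w11 w12 w21 w22 v1 v2 : ℝ,
          Real.sqrt ((w11 - 0) ^ 2 + (w12 - 2) ^ 2 + (w21 - 0) ^ 2 + (w22 - 0) ^ 2
              + (v1 - 2) ^ 2 + (v2 - 0) ^ 2) ≤ ε
          ∧ reluNet2 w11 w12 w21 w22 v1 v2 1 (1/4) ≥ 1
          ∧ reluNet2 w11 w12 w21 w22 v1 v2 (-1) (1/4) ≥ 1
          ∧ Real.sqrt (w11 ^ 2 + w12 ^ 2 + w21 ^ 2 + w22 ^ 2 + v1 ^ 2 + v2 ^ 2)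
              < 2 * Real.sqrt 2 := by
  refine ⟨⟨by norm_num [reluNet2], by norm_num [reluNet2]⟩, ?_, ?_⟩
  · rw [show (0:ℝ)^2 + 2^2 + 0^2 + 0^2 + 2^2 + 0^2 = 8 by norm_num]
    exact sqrt8_eq
  · intro ε hε hε1
    set s : ℝ := ε / 2 with hsdef
    have hs0 : 0 < s := by positivity
    have hs1 : s < 1/2 := by rw [hsdef]; linarith
    have hs2 : s^2 ≤ 1/4 := by nlinarith
    have h4 : s^4 ≤ s^2/4 := by nlinarith [sq_nonneg s, sq_nonneg (s^2)]
    have hε2 : ε = 2*s := by rw [hsdef]; ring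
    refine ⟨17*s^2/64, 2 - s^2/2, -s, s/4, 2 - s^2/2, s, ?_, ?_, ?_, ?_⟩
    · have hle : (17*s^2/64 - 0)^2 + (2 - s^2/2 - 2)^2 + (-s - 0)^2 + (s/4 - 0)^2
          + (2 - s^2/2 - 2)^2 + (s - 0)^2 ≤ ε^2 := by
        rw [hε2]; nlinarith [h4, pow_pos hs0 2]
      calc Real.sqrt _ ≤ Real.sqrt (ε^2) := Real.sqrt_le_sqrt hle
        _ = ε := Real.sqrt_sq hε.le
    · -- constraint at x₁ = (1, 1/4)
      have h1 : (0:ℝ) ≤ 17*s^2/64 * 1 + (2 - s^2/2) * (1/4) := by nlinarith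
      have h2 : (-s) * 1 + (s/4) * (1/4) ≤ 0 := by nlinarith
      rw [reluNet2, max_eq_right h1, max_eq_left h2]
      nlinarith [h4, pow_pos hs0 2]
    · -- constraint at x₂ = (−1, 1/4)
      have h1 : (0:ℝ) ≤ 17*s^2/64 * (-1) + (2 - s^2/2) * (1/4) := by nlinarith
      have h2 : (0:ℝ) ≤ (-s) * (-1) + (s/4) * (1/4) := by nlinarith
      rw [reluNet2, max_eq_right h1, max_eq_right h2]
      nlinarith [sq_nonneg s, pow_pos hs0 4, pow_pos hs0 2]
    · have hlt : (17*s^2/64)^2 + (2 - s^2/2)^2 + (-s)^2 + (s/4)^2 + (2 - s^2/2)^2 + s^2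
          < 8 := by nlinarith [h4, pow_pos hs0 2]
      calc Real.sqrt _ < Real.sqrt 8 := by
            apply Real.sqrt_lt_sqrt (by positivity) hlt
        _ = 2 * Real.sqrt 2 := sqrt8_eq
end

section
/- Let n, k ≥ 1, let z_{i,l} ∈ ℝ^{p_l} for i ∈ [n], l ∈ [k], and let y_i ∈ {−1,1}. Let θ̃ = (w̃₁,…,w̃_k, ṽ) with w̃_l ∈ ℝ^{p_l}, ṽ ∈ ℝ^k satisfy: (i) feasibility: y_i ∑_{l=1}^k ṽ_l ⟨w̃_l, z_{i,l}⟩ ≥ 1 for all i ∈ [n]; (ii) balancedness: ‖w̃_l‖ = |ṽ_l| for all l ∈ [k]; (iii) non-degeneracy: w̃_l ≠ 0 for all l ∈ [k]; (iv) KKT stationarity: there exist λ₁,…,λ_n ≥ 0, with λ_i = 0 whenever y_i ∑_l ṽ_l ⟨w̃_l, z_{i,l}⟩ ≠ 1, such that w̃_j = ∑_{i=1}^n λ_i y_i ṽ_j z_{i,j} for every j ∈ [k]. Then θ̃ is a global optimum of the maximum-margin problem: every θ′ = (w′₁,…,w′_k, v′) with y_i ∑_{l=1}^k v′_l ⟨w′_l,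 z_{i,l}⟩ ≥ 1 for all i satisfies ∑_{l=1}^k (‖w′_l‖² + (v′_l)²) ≥ ∑_{l=1}^k (‖w̃_l‖² + ṽ_l²). -/
/-- a balanced KKT point of the max-margin problem for a depth-2 linear network in
`𝒩_no-share`, all of whose hidden neurons have non-zero incoming weight vectors, is a global
optimum.  Here `z i l ∈ ℝ^{p l}` is the sub-vector of input `x_i` feeding hidden neuron `l`,
`w l` its incoming weights and `v l` its outgoing weight; the network outputs
`∑ l, v l ⟨w l, z i l⟩`. -/
theorem depth2_linear_balanced_kkt_is_global_optimum
    (n k : ℕ) (hn : 1 ≤ n) (hk : 1 ≤ k) (p : Fin k → ℕ)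
    (z : Fin n → (l : Fin k) → EuclideanSpace ℝ (Fin (p l)))
    (y : Fin n → ℝ) (hy : ∀ i, y i = 1 ∨ y i = -1)
    (wt : (l : Fin k) → EuclideanSpace ℝ (Fin (p l))) (vt : Fin k → ℝ)
    (hfeas : ∀ i, y i * ∑ l, vt l * (inner ℝ (wt l) (z i l) : ℝ) ≥ 1)
    (hbal : ∀ l, ‖wt l‖ = |vt l|)
    (hnz : ∀ l, wt l ≠ 0)
    (lam : Fin n → ℝ) (hlam : ∀ i, 0 ≤ lam i)
    (hcomp : ∀ i, y i * ∑ l, vt l * (inner ℝ (wt l) (z i l) : ℝ) ≠ 1 → lam i = 0)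
    (hstat : ∀ j, wt j = ∑ i, (lam i * y i * vt j) • z i j) :
    ∀ (w' : (l : Fin k) → EuclideanSpace ℝ (Fin (p l))) (v' : Fin k → ℝ),
      (∀ i, y i * ∑ l, v' l * (inner ℝ (w' l) (z i l) : ℝ) ≥ 1) →
      ∑ l, (‖w' l‖ ^ 2 + (v' l) ^ 2) ≥ ∑ l, (‖wt l‖ ^ 2 + (vt l) ^ 2) := by
  intro w' v' hfeas'
  have hvt : ∀ l, vt l ≠ 0 := by
    intro l h
    apply hnz l
    have hb := hbal l
    rw [h, abs_zero] at hb
    exact norm_eq_zero.mp hb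
  -- key inner product identity from stationarity
  have hinner : ∀ (l : Fin k) (w : EuclideanSpace ℝ (Fin (p l))),
      (inner ℝ w (wt l) : ℝ) = vt l * ∑ i, lam i * (y i * (inner ℝ w (z i l) : ℝ)) := by
    intro l w
    rw [hstat l, inner_sum, Finset.mul_sum]
    refine Finset.sum_congr rfl fun i _ => ?_
    rw [real_inner_smul_right]; ring
  -- ∑ ‖wt l‖² = ∑ lam i
  have hA : ∑ l, ‖wt l‖ ^ 2 = ∑ i, lam i := by
    have h1 : ∑ l, ‖wt l‖ ^ 2
        = ∑ l, ∑ i, lam i * (y i * (vt l * (inner ℝ (wt l) (z i l) : ℝ))) := by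
      refine Finset.sum_congr rfl fun l _ => ?_
      rw [← real_inner_self_eq_norm_sq, hinner l (wt l), Finset.mul_sum]
      refine Finset.sum_congr rfl fun i _ => ?_; ring
    rw [h1, Finset.sum_comm]
    refine Finset.sum_congr rfl fun i _ => ?_
    have h2 : ∑ l, lam i * (y i * (vt l * (inner ℝ (wt l) (z i l) : ℝ)))
        = lam i * (y i * ∑ l, vt l * (inner ℝ (wt l) (z i l) : ℝ)) := by
      rw [Finset.mul_sum, Finset.mul_sum]
    rw [h2]
    by_cases h : y i * ∑ l, vt l * (inner ℝ (wt l) (z i l) : ℝ) = 1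
    · rw [h, mul_one]
    · rw [hcomp i h]; ring
  have hV : ∑ l, (vt l) ^ 2 = ∑ l, ‖wt l‖ ^ 2 := by
    refine Finset.sum_congr rfl fun l _ => ?_
    rw [hbal l, sq_abs]
  -- lower bound for the feasible point
  have hB : ∑ i, lam i ≤ ∑ l, (v' l / vt l) * (inner ℝ (w' l) (wt l) : ℝ) := by
    have h1 : ∑ l, (v' l / vt l) * (inner ℝ (w' l) (wt l) : ℝ)
        = ∑ i, lam i * (y i * ∑ l, v' l * (inner ℝ (w' l) (z i l) : ℝ)) := by
      have h2 : ∑ l, (v' l / vt l) * (inner ℝ (w' l) (wt l) : ℝ)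
          = ∑ l, ∑ i, lam i * (y i * (v' l * (inner ℝ (w' l) (z i l) : ℝ))) := by
        refine Finset.sum_congr rfl fun l _ => ?_
        rw [hinner l (w' l), Finset.mul_sum, Finset.mul_sum]
        refine Finset.sum_congr rfl fun i _ => ?_
        field_simp [hvt l]
      rw [h2, Finset.sum_comm]
      refine Finset.sum_congr rfl fun i _ => ?_
      rw [Finset.mul_sum, Finset.mul_sum]
    rw [h1]
    calc ∑ i, lam i = ∑ i, lam i * 1 := by simp
      _ ≤ _ := by
        refine Finset.sum_le_sum fun i _ => ?_
        exact mul_le_mul_of_nonneg_left (hfeas' i) (hlam i)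
  have key : ∀ l, (v' l / vt l) * (inner ℝ (w' l) (wt l) : ℝ)
      ≤ (‖w' l‖ ^ 2 + (v' l) ^ 2) / 2 := by
    intro l
    have hcpos : (0:ℝ) < |vt l| := abs_pos.mpr (hvt l)
    have h2 : |(inner ℝ (w' l) (wt l) : ℝ)| ≤ ‖w' l‖ * |vt l| := by
      calc |(inner ℝ (w' l) (wt l) : ℝ)| ≤ ‖w' l‖ * ‖wt l‖ := abs_real_inner_le_norm _ _
        _ = ‖w' l‖ * |vt l| := by rw [hbal l]
    have h1 : |(v' l / vt l) * (inner ℝ (w' l) (wt l) : ℝ)| ≤ |v' l| * ‖w' l‖ := by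
      rw [abs_mul, abs_div]
      calc |v' l| / |vt l| * |(inner ℝ (w' l) (wt l) : ℝ)|
          ≤ |v' l| / |vt l| * (‖w' l‖ * |vt l|) :=
            mul_le_mul_of_nonneg_left h2 (by positivity)
        _ = |v' l| * ‖w' l‖ := by field_simp
    nlinarith [le_abs_self ((v' l / vt l) * (inner ℝ (w' l) (wt l) : ℝ)),
      sq_abs (v' l), sq_nonneg (|v' l| - ‖w' l‖), abs_nonneg (v' l), norm_nonneg (w' l)]
  have hsum : ∑ l, (v' l / vt l) * (inner ℝ (w' l) (wt l) : ℝ)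
      ≤ ∑ l, (‖w' l‖ ^ 2 + (v' l) ^ 2) / 2 :=
    Finset.sum_le_sum fun l _ => key l
  have : ∑ l, (‖wt l‖ ^ 2 + (vt l) ^ 2) = 2 * ∑ i, lam i := by
    rw [Finset.sum_add_distrib, hV, hA]; ring
  rw [this]
  have h3 : ∑ l, (‖w' l‖ ^ 2 + (v' l) ^ 2) / 2
      = (∑ l, (‖w' l‖ ^ 2 + (v' l) ^ 2)) / 2 := by
    rw [Finset.sum_div]
  linarith [hB, hsum, h3 ▸ hsum]
end

section
/- Let n, k ≥ 1, let z_{i,l} ∈ ℝ^{p_l} for i ∈ [n], l ∈ [k], and let y_i ∈ {−1,1}. Let θ̃ = (w̃₁,…,w̃_k, ṽ) satisfy: (i) y_i ∑_{l=1}^k ṽ_l ⟨w̃_l, z_{i,l}⟩ ≥ 1 for all i; (ii) ‖w̃_l‖ = |ṽ_l| for all l; and (iii) the vectors ũ_l := ṽ_l·w̃_l form a global optimum of the convex problem min ∑_{l=1}^k ‖u_l‖ subject to y_i ∑_{l=1}^k ⟨u_l, z_{i,l}⟩ ≥ 1 for all i (i.e., every (u₁,…,u_k) satisfying these constraints has ∑_l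 ‖u_l‖ ≥ ∑_l ‖ũ_l‖). Then every θ′ = (w′₁,…,w′_k, v′) with y_i ∑_{l=1}^k v′_l ⟨w′_l, z_{i,l}⟩ ≥ 1 for all i satisfies ∑_{l=1}^k (‖w′_l‖² + (v′_l)²) ≥ ∑_{l=1}^k (‖w̃_l‖² + ṽ_l²). -/
/-- for a depth-2 linear network in `𝒩_no-share`, if `θ̃` is feasible and balanced
(`‖w̃_l‖ = |ṽ_l|`), and the product vectors `ũ_l = ṽ_l·w̃_l` globally solve the convex problem
`min ∑ l ‖u_l‖ s.t. y_i ∑ l ⟨u_l, z_{i,l}⟩ ≥ 1`, then `θ̃` is a global optimum of the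
max-margin problem in parameter space. -/
theorem depth2_linear_global_opt_of_product_opt
    (n k : ℕ) (hn : 1 ≤ n) (hk : 1 ≤ k) (p : Fin k → ℕ)
    (z : Fin n → (l : Fin k) → EuclideanSpace ℝ (Fin (p l)))
    (y : Fin n → ℝ) (hy : ∀ i, y i = 1 ∨ y i = -1)
    (wt : (l : Fin k) → EuclideanSpace ℝ (Fin (p l))) (vt : Fin k → ℝ)
    (hfeas : ∀ i, y i * ∑ l, vt l * (inner ℝ (wt l) (z i l) : ℝ) ≥ 1)
    (hbal : ∀ l, ‖wt l‖ = |vt l|)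
    (hopt : ∀ u : (l : Fin k) → EuclideanSpace ℝ (Fin (p l)),
      (∀ i, y i * ∑ l, (inner ℝ (u l) (z i l) : ℝ) ≥ 1) →
      ∑ l, ‖u l‖ ≥ ∑ l, ‖vt l • wt l‖) :
    ∀ (w' : (l : Fin k) → EuclideanSpace ℝ (Fin (p l))) (v' : Fin k → ℝ),
      (∀ i, y i * ∑ l, v' l * (inner ℝ (w' l) (z i l) : ℝ) ≥ 1) →
      ∑ l, (‖w' l‖ ^ 2 + (v' l) ^ 2) ≥ ∑ l, (‖wt l‖ ^ 2 + (vt l) ^ 2) := by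
  intro w' v' hfeas'
  have hu : ∀ i, y i * ∑ l, (inner ℝ (v' l • w' l) (z i l) : ℝ) ≥ 1 := by
    intro i
    have := hfeas' i
    simp only [real_inner_smul_left]
    simpa [mul_comm, mul_left_comm, Finset.mul_sum] using this
  have key := hopt (fun l => v' l • w' l) hu
  calc ∑ l, (‖wt l‖ ^ 2 + (vt l) ^ 2)
      = ∑ l, 2 * ‖vt l • wt l‖ := by
        refine Finset.sum_congr rfl fun l _ => ?_
        rw [norm_smul, hbal l]
        simp [Real.norm_eq_abs, sq, sq_abs]
        ring
    _ ≤ ∑ l, 2 * ‖v' l • w' l‖ := by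
        have : (2:ℝ) * ∑ l, ‖vt l • wt l‖ ≤ 2 * ∑ l, ‖v' l • w' l‖ := by linarith
        simpa [Finset.mul_sum] using this
    _ ≤ ∑ l, (‖w' l‖ ^ 2 + (v' l) ^ 2) := by
        refine Finset.sum_le_sum fun l _ => ?_
        rw [norm_smul, Real.norm_eq_abs]
        nlinarith [sq_nonneg (‖w' l‖ - |v' l|), abs_nonneg (v' l), norm_nonneg (w' l), sq_abs (v' l)]
end

section
/- Define Φ(θ; x) = ∑_{j=1}^4 v_j·max(0, ⟨w_j, x⟩) for θ = (w₁,…,w₄, v) ∈ (ℝ²)⁴ × ℝ⁴ and x ∈ ℝ². Consider the dataset x₁ = (0, 1), x₂ = (1, 0), x₃ = (0, −1), x₄ = (−1, 0) with y₁ = ⋯ = y₄ = 1, and let θ̃ have w̃_j = x_j and ṽ_j = 1 for every j ∈ [4]. Then: (a) Φ(θ̃; x_i) = 1 for all i, so θ̃ is feasible; (b) w̃_j ≠ 0 for all j; and (c) θ̃ is not a local optimum: for every ε ∈ (0, 1) there exists θ′ with ‖θ′ − θ̃‖ ≤ ε, Φ(θ′; x_i) ≥ 1 for all i ∈ [4],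 and ‖θ′‖ < ‖θ̃‖ = 2√2. -/
/-- Depth-2 fully-connected ReLU network with `k` hidden neurons and input dimension 2:
`Φ(θ; x) = ∑ j, v_j·max(0, ⟨w_j, x⟩)`. -/
def reluNetK (k : ℕ) (w : Fin k → Fin 2 → ℝ) (v : Fin k → ℝ) (x : Fin 2 → ℝ) : ℝ :=
  ∑ j, v j * max 0 (w j 0 * x 0 + w j 1 * x 1)

/-- Auxiliary: rational parametrization of a slight rotation by "angle" with
`cos = c`, `sin = s`, and the rescaling factor `g = 1/(c+s) < 1`, with quantitative
perturbation bounds. -/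
lemma relu_aux (t : ℝ) (ht0 : 0 < t) (ht1 : t < 1/8) :
    ∃ c s g : ℝ, 0 < c ∧ 0 < s ∧ 0 < g ∧ c^2 + s^2 = 1 ∧ g*(c+s) = 1 ∧ g < 1 ∧
      s^2 + (1-c)^2 ≤ 4*t^2 ∧ (g-1)^2 ≤ 4*t^2 := by
  have hA : (0:ℝ) < 1 + t^2 := by positivity
  have hD : (0:ℝ) < 1 + 2*t - t^2 := by nlinarith
  refine ⟨(1 - t^2)/(1 + t^2), 2*t/(1 + t^2), (1 + t^2)/(1 + 2*t - t^2), ?_, ?_, ?_, ?_, ?_, ?_, ?_, ?_⟩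
  · exact div_pos (by nlinarith) hA
  · positivity
  · exact div_pos hA hD
  · field_simp; ring
  · rw [← add_div, div_mul_div_comm, div_eq_one_iff_eq (mul_ne_zero hD.ne' hA.ne')]; ring
  · rw [div_lt_one hD]; nlinarith
  · have hceq : (1 - t^2)/(1 + t^2) * (1 + t^2) = 1 - t^2 := by field_simp
    have hseq : 2*t/(1 + t^2) * (1 + t^2) = 2*t := by field_simp
    set c := (1 - t^2)/(1 + t^2)
    set s := 2*t/(1 + t^2)
    have h1c : 1 - c ≤ 2*t^2 := by nlinarith
    have hcs : c^2 + s^2 = 1 := by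
      show ((1 - t^2)/(1 + t^2))^2 + (2*t/(1 + t^2))^2 = 1
      field_simp; ring
    have hc1 : c ≤ 1 := by nlinarith
    nlinarith [sq_nonneg (1-c)]
  · have hgeq : (1 + t^2)/(1 + 2*t - t^2) * (1 + 2*t - t^2) = 1 + t^2 := div_mul_cancel₀ _ hD.ne'
    set g := (1 + t^2)/(1 + 2*t - t^2)
    have hg0 : 0 < g := div_pos hA hD
    have hg1 : g ≤ 1 := by rw [div_le_one hD]; nlinarith
    have h1 : 1 - g ≤ 2*t := by nlinarith
    nlinarith

/-- for the dataset `x₁=(0,1), x₂=(1,0), x₃=(0,−1), x₄=(−1,0)` with all labels `1`,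
the point `θ̃` with `w̃_j = x_j`, `ṽ_j = 1` is feasible with margin exactly `1`, has non-zero
incoming weights at every neuron, but is not a local optimum of the max-margin problem. -/
theorem relu_fc_four_neurons_not_local_optimum
    (xs : Fin 4 → Fin 2 → ℝ)
    (hxs : xs = ![![0, 1], ![1, 0], ![0, -1], ![-1, 0]]) :
    (∀ i : Fin 4, reluNetK 4 xs (fun _ => 1) (xs i) = 1)
    ∧ (∀ j : Fin 4, xs j ≠ 0)
    ∧ Real.sqrt ((∑ j : Fin 4, ((xs j 0) ^ 2 + (xs j 1) ^ 2)) + ∑ j : Fin 4, (1 : ℝ) ^ 2)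
        = 2 * Real.sqrt 2
    ∧ ∀ ε : ℝ, 0 < ε → ε < 1 →
        ∃ (w' : Fin 4 → Fin 2 → ℝ) (v' : Fin 4 → ℝ),
          Real.sqrt ((∑ j : Fin 4, ((w' j 0 - xs j 0) ^ 2 + (w' j 1 - xs j 1) ^ 2))
              + ∑ j : Fin 4, (v' j - 1) ^ 2) ≤ ε
          ∧ (∀ i : Fin 4, reluNetK 4 w' v' (xs i) ≥ 1)
          ∧ Real.sqrt ((∑ j : Fin 4, ((w' j 0) ^ 2 + (w' j 1) ^ 2)) + ∑ j : Fin 4, (v' j) ^ 2)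
              < 2 * Real.sqrt 2 := by
  subst hxs
  have h8 : (2 : ℝ) * Real.sqrt 2 = Real.sqrt 8 := by
    rw [show (8:ℝ) = 2^2 * 2 by norm_num, Real.sqrt_mul (by positivity),
      Real.sqrt_sq (by norm_num)]
  refine ⟨?_, ?_, ?_, ?_⟩
  · intro i
    fin_cases i <;>
      simp [reluNetK, Fin.sum_univ_four] <;> norm_num
  · intro j
    fin_cases j <;> simp [funext_iff, Fin.exists_fin_two] <;> norm_num
  · rw [h8]
    norm_num [Fin.sum_univ_four, Matrix.cons_val_two, Matrix.cons_val_three]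
  · intro ε hε0 hε1
    obtain ⟨c, s, g, hc, hs, hg0, hcs, hgcs, hg1, hwb, hgb⟩ :=
      relu_aux (ε/9) (by positivity) (by linarith)
    refine ⟨![![-s, c], ![c, s], ![s, -c], ![-c, -s]], fun _ => g, ?_, ?_, ?_⟩
    · -- distance bound
      have hdist : ((∑ j : Fin 4, ((![![-s, c], ![c, s], ![s, -c], ![-c, -s]] j 0 -
            (![![0, 1], ![1, 0], ![0, -1], ![-1, 0]] : Fin 4 → Fin 2 → ℝ) j 0) ^ 2 +
            (![![-s, c], ![c, s], ![s, -c], ![-c, -s]] j 1 -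
            (![![0, 1], ![1, 0], ![0, -1], ![-1, 0]] : Fin 4 → Fin 2 → ℝ) j 1) ^ 2))
            + ∑ j : Fin 4, ((fun _ => g) j - 1) ^ 2) ≤ ε^2 := by
        simp only [Fin.sum_univ_four]
        norm_num [Matrix.cons_val_two, Matrix.cons_val_three]
        nlinarith [hwb, hgb, hε0]
      calc Real.sqrt _ ≤ Real.sqrt (ε^2) := Real.sqrt_le_sqrt hdist
        _ = ε := Real.sqrt_sq hε0.le
    · -- feasibility
      intro i
      have hmc : max 0 c = c := max_eq_right hc.le
      have hms : max 0 s = s := max_eq_right hs.le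
      have hmnc : max 0 (-c) = 0 := max_eq_left (by linarith)
      have hmns : max 0 (-s) = 0 := max_eq_left (by linarith)
      fin_cases i <;>
        · simp only [reluNetK, Fin.sum_univ_four]
          norm_num [hmc, hms, hmnc, hmns, Matrix.cons_val_two, Matrix.cons_val_three]
          nlinarith [hgcs]
    · -- norm strictly smaller
      rw [h8]
      have hnorm : ((∑ j : Fin 4, ((![![-s, c], ![c, s], ![s, -c], ![-c, -s]] j 0) ^ 2 +
            (![![-s, c], ![c, s], ![s, -c], ![-c, -s]] j 1) ^ 2))
            + ∑ j : Fin 4, ((fun _ => g) j) ^ 2) < 8 := by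
        simp only [Fin.sum_univ_four]
        norm_num [Matrix.cons_val_two, Matrix.cons_val_three]
        nlinarith [hcs, hg0, hg1]
      exact Real.sqrt_lt_sqrt (by positivity) hnorm
end

section
/- Let n, k ≥ 1, let z_{i,l} ∈ ℝ^{p_l} for i ∈ [n], l ∈ [k], and let y_i ∈ {−1,1}. Define Φ_i(θ) = ∑_{l=1}^k v_l·max(0, ⟨w_l, z_{i,l}⟩) for θ = (w₁,…,w_k, v). Let θ̃ = (w̃₁,…,w̃_k, ṽ) satisfy: (i) non-zero neuron inputs: ⟨w̃_l, z_{i,l}⟩ ≠ 0 for all i ∈ [n], l ∈ [k]; (ii) feasibility: y_i Φ_i(θ̃) ≥ 1 for all i; (iii) balancedness: ‖w̃_l‖ = |ṽ_l| for all l; (iv) KKT stationarity: there exist λ₁,…,λ_n ≥ 0, with λ_i = 0 whenever y_i Φ_i(θ̃) ≠ 1, such that w̃_j = ∑_{i=1}^n λ_i y_i ṽ_j 𝟙[⟨w̃_j, z_{i,j}⟩ > 0] z_{i,j} for every j ∈ [k]. Then θ̃ is a local optimum of the maximum-margin problem: there exists ε > 0 such that every θ′ = (w′₁,…,w′_k,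 v′) with ‖θ′ − θ̃‖ ≤ ε and y_i Φ_i(θ′) ≥ 1 for all i satisfies ∑_{l=1}^k (‖w′_l‖² + (v′_l)²) ≥ ∑_{l=1}^k (‖w̃_l‖² + ṽ_l²). -/
set_option maxHeartbeats 1600000


/-- a balanced KKT point of the max-margin problem for a depth-2 ReLU network in
`𝒩_no-share`, at which the input to every hidden neuron on every data point is non-zero, is a
local optimum.  Here `z i l ∈ ℝ^{p l}` is the sub-vector of input `x_i` feeding hidden neuron
`l`; the network outputs `∑ l, v l · max(0, ⟨w l, z i l⟩)`. -/
theorem depth2_relu_balanced_kkt_is_local_optimum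
    (n k : ℕ) (hn : 1 ≤ n) (hk : 1 ≤ k) (p : Fin k → ℕ)
    (z : Fin n → (l : Fin k) → EuclideanSpace ℝ (Fin (p l)))
    (y : Fin n → ℝ) (hy : ∀ i, y i = 1 ∨ y i = -1)
    (wt : (l : Fin k) → EuclideanSpace ℝ (Fin (p l))) (vt : Fin k → ℝ)
    (hnzin : ∀ i l, (inner ℝ (wt l) (z i l) : ℝ) ≠ 0)
    (hfeas : ∀ i, y i * ∑ l, vt l * max 0 (inner ℝ (wt l) (z i l) : ℝ) ≥ 1)
    (hbal : ∀ l, ‖wt l‖ = |vt l|)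
    (lam : Fin n → ℝ) (hlam : ∀ i, 0 ≤ lam i)
    (hcomp : ∀ i, y i * ∑ l, vt l * max 0 (inner ℝ (wt l) (z i l) : ℝ) ≠ 1 → lam i = 0)
    (hstat : ∀ j, wt j = ∑ i,
      (lam i * y i * vt j * (if 0 < (inner ℝ (wt j) (z i j) : ℝ) then 1 else 0)) • z i j) :
    ∃ ε : ℝ, 0 < ε ∧
      ∀ (w' : (l : Fin k) → EuclideanSpace ℝ (Fin (p l))) (v' : Fin k → ℝ),
        Real.sqrt ((∑ l, ‖w' l - wt l‖ ^ 2) + ∑ l, (v' l - vt l) ^ 2) ≤ ε →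
        (∀ i, y i * ∑ l, v' l * max 0 (inner ℝ (w' l) (z i l) : ℝ) ≥ 1) →
        ∑ l, (‖w' l‖ ^ 2 + (v' l) ^ 2) ≥ ∑ l, (‖wt l‖ ^ 2 + (vt l) ^ 2) := by
  classical
  have hvne : ∀ l, vt l ≠ 0 := by
    intro l hv
    have hw : wt l = 0 := norm_eq_zero.mp (by rw [hbal l, hv, abs_zero])
    exact hnzin ⟨0, hn⟩ l (by rw [hw, inner_zero_left])
  have hnk : Nonempty (Fin n × Fin k) := ⟨⟨⟨0, hn⟩, ⟨0, hk⟩⟩⟩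
  set f : Fin n × Fin k → ℝ :=
    fun q => |(inner ℝ (wt q.2) (z q.1 q.2) : ℝ)| / (‖z q.1 q.2‖ + 1) with hf
  set ε : ℝ := Finset.univ.inf' Finset.univ_nonempty f with hεdef
  have hε : 0 < ε := by
    rw [hεdef, Finset.lt_inf'_iff]
    intro q _
    apply div_pos (abs_pos.mpr (hnzin q.1 q.2))
    positivity
  refine ⟨ε, hε, ?_⟩
  intro w' v' hnear hfeas'
  -- distance bounds per neuron
  have hS : (∑ l, ‖w' l - wt l‖ ^ 2) + ∑ l, (v' l - vt l) ^ 2 ≤ ε ^ 2 := by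
    have h0 : 0 ≤ (∑ l, ‖w' l - wt l‖ ^ 2) + ∑ l, (v' l - vt l) ^ 2 := by positivity
    nlinarith [Real.sq_sqrt h0,
      Real.sqrt_nonneg ((∑ l, ‖w' l - wt l‖ ^ 2) + ∑ l, (v' l - vt l) ^ 2)]
  have hwcl : ∀ l, ‖w' l - wt l‖ ≤ ε := by
    intro l
    have h1 : ‖w' l - wt l‖ ^ 2 ≤ ε ^ 2 := by
      have h2 : ‖w' l - wt l‖ ^ 2 ≤ ∑ x, ‖w' x - wt x‖ ^ 2 := by
        simpa using Finset.single_le_sum (f := fun l => ‖w' l - wt l‖ ^ 2)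
          (fun l _ => by positivity) (Finset.mem_univ l)
      have h3 : (0:ℝ) ≤ ∑ l, (v' l - vt l) ^ 2 := by positivity
      linarith
    nlinarith [norm_nonneg (w' l - wt l)]
  -- sign preservation
  have hsign : ∀ i l, (0 < (inner ℝ (w' l) (z i l) : ℝ)) ↔ (0 < (inner ℝ (wt l) (z i l) : ℝ)) := by
    intro i l
    have hεle : ε ≤ f (i, l) := by rw [hεdef]; exact Finset.inf'_le _ (Finset.mem_univ _)
    have hd : |(inner ℝ (w' l - wt l) (z i l) : ℝ)| < |(inner ℝ (wt l) (z i l) : ℝ)| := by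
      have h1 : |(inner ℝ (w' l - wt l) (z i l) : ℝ)| ≤ ‖w' l - wt l‖ * ‖z i l‖ :=
        abs_real_inner_le_norm _ _
      have h2 : ‖w' l - wt l‖ * ‖z i l‖ ≤ ε * ‖z i l‖ :=
        mul_le_mul_of_nonneg_right (hwcl l) (norm_nonneg _)
      have h4 : ε ≤ |(inner ℝ (wt l) (z i l) : ℝ)| / (‖z i l‖ + 1) := hεle
      have h5 : (0:ℝ) < ‖z i l‖ + 1 := by positivity
      have h6 : 0 < |(inner ℝ (wt l) (z i l) : ℝ)| := abs_pos.mpr (hnzin i l)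
      have h7 : ε * (‖z i l‖ + 1) ≤ |(inner ℝ (wt l) (z i l) : ℝ)| :=
        (le_div_iff₀ h5).mp h4
      nlinarith [norm_nonneg (z i l)]
    have hsplit : (inner ℝ (w' l) (z i l) : ℝ)
        = (inner ℝ (wt l) (z i l) : ℝ) + (inner ℝ (w' l - wt l) (z i l) : ℝ) := by
      rw [inner_sub_left]; ring
    obtain ⟨hd1, hd2⟩ := abs_lt.mp hd
    constructor <;> intro h
    · by_contra hneg
      have hlt : (inner ℝ (wt l) (z i l) : ℝ) < 0 :=
        lt_of_le_of_ne (not_lt.mp hneg) (hnzin i l)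
      rw [abs_of_neg hlt] at hd1 hd2
      rw [hsplit] at h
      linarith
    · rw [abs_of_pos h] at hd1 hd2
      rw [hsplit]
      linarith
  -- indicator
  set ind : Fin n → Fin k → ℝ :=
    fun i l => if 0 < (inner ℝ (wt l) (z i l) : ℝ) then (1:ℝ) else 0 with hind
  -- v-rescaled stationarity
  have hst' : ∀ l, (vt l)⁻¹ • wt l = ∑ i, (lam i * y i * ind i l) • z i l := by
    intro l
    have h := congrArg (fun x : EuclideanSpace ℝ (Fin (p l)) => (vt l)⁻¹ • x) (hstat l)
    simp only [Finset.smul_sum, smul_smul] at h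
    rw [h]
    refine Finset.sum_congr rfl fun i _ => ?_
    congr 1
    rw [show (vt l)⁻¹ * (lam i * y i * vt l * ind i l)
        = (vt l)⁻¹ * vt l * (lam i * y i * ind i l) by ring,
      inv_mul_cancel₀ (hvne l), one_mul]
  -- Φ rewrites
  have hΦt : ∀ i, ∑ l, ind i l * (inner ℝ (z i l) (vt l • wt l) : ℝ)
      = ∑ l, vt l * max 0 (inner ℝ (wt l) (z i l) : ℝ) := by
    intro i
    refine Finset.sum_congr rfl fun l _ => ?_
    rw [real_inner_smul_right, real_inner_comm]
    simp only [hind]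
    by_cases h : 0 < (inner ℝ (wt l) (z i l) : ℝ)
    · rw [if_pos h, max_eq_right h.le]; ring
    · rw [if_neg h, max_eq_left (not_lt.mp h)]; ring
  have hΦ' : ∀ i, ∑ l, ind i l * (inner ℝ (z i l) (v' l • w' l) : ℝ)
      = ∑ l, v' l * max 0 (inner ℝ (w' l) (z i l) : ℝ) := by
    intro i
    refine Finset.sum_congr rfl fun l _ => ?_
    rw [real_inner_smul_right, real_inner_comm]
    simp only [hind]
    by_cases h : 0 < (inner ℝ (wt l) (z i l) : ℝ)
    · rw [if_pos h, max_eq_right ((hsign i l).mpr h).le]; ring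
    · rw [if_neg h, max_eq_left (not_lt.mp (fun hc => h ((hsign i l).mp hc)))]; ring
  -- the key cross term
  have hT : ∑ l, (inner ℝ ((vt l)⁻¹ • wt l) (v' l • w' l - vt l • wt l) : ℝ)
      = ∑ i, lam i * ((y i * ∑ l, v' l * max 0 (inner ℝ (w' l) (z i l) : ℝ))
          - (y i * ∑ l, vt l * max 0 (inner ℝ (wt l) (z i l) : ℝ))) := by
    have h1 : ∀ l, (inner ℝ ((vt l)⁻¹ • wt l) (v' l • w' l - vt l • wt l) : ℝ)
        = ∑ i, lam i * y i * (ind i l * (inner ℝ (z i l) (v' l • w' l - vt l • wt l) : ℝ)) := by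
      intro l
      rw [hst' l, sum_inner]
      refine Finset.sum_congr rfl fun i _ => ?_
      rw [real_inner_smul_left]
      ring
    rw [Finset.sum_congr rfl fun l _ => h1 l, Finset.sum_comm]
    refine Finset.sum_congr rfl fun i _ => ?_
    rw [← hΦ' i, ← hΦt i, Finset.mul_sum, Finset.mul_sum, ← Finset.sum_sub_distrib,
      Finset.mul_sum]
    refine Finset.sum_congr rfl fun l _ => ?_
    rw [inner_sub_right]
    ring
  have hT0 : 0 ≤ ∑ l, (inner ℝ ((vt l)⁻¹ • wt l) (v' l • w' l - vt l • wt l) : ℝ) := by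
    rw [hT]
    refine Finset.sum_nonneg fun i _ => ?_
    by_cases hB : y i * ∑ l, vt l * max 0 (inner ℝ (wt l) (z i l) : ℝ) = 1
    · rw [hB]
      exact mul_nonneg (hlam i) (by linarith [hfeas' i])
    · simp [hcomp i hB]
  -- norm facts
  have hsnorm : ∀ l, ‖(vt l)⁻¹ • wt l‖ = 1 := by
    intro l
    rw [norm_smul, hbal l, Real.norm_eq_abs, abs_inv,
      inv_mul_cancel₀ (abs_ne_zero.mpr (hvne l))]
  have hsinner : ∀ l, (inner ℝ ((vt l)⁻¹ • wt l) (vt l • wt l) : ℝ) = ‖wt l‖ ^ 2 := by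
    intro l
    rw [real_inner_smul_left, real_inner_smul_right, real_inner_self_eq_norm_sq,
      ← mul_assoc, inv_mul_cancel₀ (hvne l), one_mul]
  have hbal2 : ∀ l, (vt l) ^ 2 = ‖wt l‖ ^ 2 := by
    intro l
    rw [hbal l, sq_abs]
  -- per-neuron AM-GM bound
  have hAM : ∀ l, 2 * (inner ℝ ((vt l)⁻¹ • wt l) (v' l • w' l) : ℝ) ≤ ‖w' l‖ ^ 2 + (v' l) ^ 2 := by
    intro l
    have h1 : (inner ℝ ((vt l)⁻¹ • wt l) (v' l • w' l) : ℝ) ≤ ‖v' l • w' l‖ := by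
      have := real_inner_le_norm ((vt l)⁻¹ • wt l) (v' l • w' l)
      rwa [hsnorm l, one_mul] at this
    have h2 : ‖v' l • w' l‖ = |v' l| * ‖w' l‖ := by
      rw [norm_smul, Real.norm_eq_abs]
    nlinarith [sq_abs (v' l), sq_nonneg (|v' l| - ‖w' l‖), abs_nonneg (v' l),
      norm_nonneg (w' l)]
  -- assemble
  have hsum1 : ∑ l, 2 * (inner ℝ ((vt l)⁻¹ • wt l) (v' l • w' l) : ℝ)
      ≤ ∑ l, (‖w' l‖ ^ 2 + (v' l) ^ 2) :=
    Finset.sum_le_sum fun l _ => hAM l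
  have hsum2 : ∑ l, (‖wt l‖ ^ 2 + (vt l) ^ 2)
      ≤ ∑ l, 2 * (inner ℝ ((vt l)⁻¹ • wt l) (v' l • w' l) : ℝ) := by
    have h3 : ∀ l, 2 * (inner ℝ ((vt l)⁻¹ • wt l) (v' l • w' l) : ℝ)
        = 2 * (inner ℝ ((vt l)⁻¹ • wt l) (v' l • w' l - vt l • wt l) : ℝ)
          + (‖wt l‖ ^ 2 + (vt l) ^ 2) := by
      intro l
      have := inner_sub_right (𝕜 := ℝ) ((vt l)⁻¹ • wt l) (v' l • w' l) (vt l • wt l)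
      rw [hsinner l] at this
      rw [hbal2 l]
      linarith
    have h5 : ∑ l, (2 * (inner ℝ ((vt l)⁻¹ • wt l) (v' l • w' l - vt l • wt l) : ℝ)
          + (‖wt l‖ ^ 2 + (vt l) ^ 2))
        = 2 * (∑ l, (inner ℝ ((vt l)⁻¹ • wt l) (v' l • w' l - vt l • wt l) : ℝ))
          + ∑ l, (‖wt l‖ ^ 2 + (vt l) ^ 2) := by
      rw [Finset.sum_add_distrib, Finset.mul_sum]
    rw [Finset.sum_congr rfl fun l _ => h3 l, h5]
    linarith
  linarith
end

section
/- Let n, k ≥ 1, let z_{i,l} ∈ ℝ^{p_l} for i ∈ [n], l ∈ [k], and let y_i ∈ {−1,1}. Let θ̃ = (w̃₁,…,w̃_k, ṽ) satisfy hypotheses (i)–(iv): (i) ⟨w̃_l, z_{i,l}⟩ ≠ 0 for all i, l; (ii) y_i ∑_{l} ṽ_l·max(0, ⟨w̃_l, z_{i,l}⟩) ≥ 1 for all i; (iii) ‖w̃_l‖ = |ṽ_l| for all l; (iv) there exist λ₁,…,λ_n ≥ 0 with λ_i = 0 whenever y_i ∑_l ṽ_l·max(0, ⟨w̃_l, z_{i,l}⟩)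 ≠ 1 and w̃_j = ∑_i λ_i y_i ṽ_j 𝟙[⟨w̃_j, z_{i,j}⟩ > 0] z_{i,j} for every j. Set A_{il} = 1 if ⟨w̃_l, z_{i,l}⟩ > 0 and A_{il} = 0 otherwise, and ũ_l = ṽ_l·w̃_l. Then (ũ₁,…,ũ_k) is a global optimum of the convex problem: minimize ∑_{l=1}^k ‖u_l‖ subject to y_i ∑_{l=1}^k A_{il} ⟨u_l, z_{i,l}⟩ ≥ 1 for all i ∈ [n]; that is, every (u₁,…,u_k) satisfying these constraints has ∑_l ‖u_l‖ ≥ ∑_l ‖ũ_l‖. -/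
/-- at a balanced KKT point of the max-margin problem for a depth-2 ReLU network in
`𝒩_no-share` with non-zero inputs to all hidden neurons, the product vectors `ũ_l = ṽ_l·w̃_l`
form a global optimum of the linearized group-norm margin problem obtained by freezing the
activation pattern `A_{il} = 𝟙[⟨w̃_l, z_{i,l}⟩ > 0]`. -/
theorem depth2_relu_products_solve_frozen_problem
    (n k : ℕ) (hn : 1 ≤ n) (hk : 1 ≤ k) (p : Fin k → ℕ)
    (z : Fin n → (l : Fin k) → EuclideanSpace ℝ (Fin (p l)))
    (y : Fin n → ℝ) (hy : ∀ i, y i = 1 ∨ y i = -1)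
    (wt : (l : Fin k) → EuclideanSpace ℝ (Fin (p l))) (vt : Fin k → ℝ)
    (hnzin : ∀ i l, (inner ℝ (wt l) (z i l) : ℝ) ≠ 0)
    (hfeas : ∀ i, y i * ∑ l, vt l * max 0 (inner ℝ (wt l) (z i l) : ℝ) ≥ 1)
    (hbal : ∀ l, ‖wt l‖ = |vt l|)
    (lam : Fin n → ℝ) (hlam : ∀ i, 0 ≤ lam i)
    (hcomp : ∀ i, y i * ∑ l, vt l * max 0 (inner ℝ (wt l) (z i l) : ℝ) ≠ 1 → lam i = 0)
    (hstat : ∀ j, wt j = ∑ i,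
      (lam i * y i * vt j * (if 0 < (inner ℝ (wt j) (z i j) : ℝ) then 1 else 0)) • z i j)
    (A : Fin n → Fin k → ℝ)
    (hA : ∀ i l, A i l = if 0 < (inner ℝ (wt l) (z i l) : ℝ) then 1 else 0) :
    ∀ u : (l : Fin k) → EuclideanSpace ℝ (Fin (p l)),
      (∀ i, y i * ∑ l, A i l * (inner ℝ (u l) (z i l) : ℝ) ≥ 1) →
      ∑ l, ‖u l‖ ≥ ∑ l, ‖vt l • wt l‖ := by
  intro u hu
  classical
  set s : (l : Fin k) → EuclideanSpace ℝ (Fin (p l)) :=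
    fun l => ∑ i, (lam i * y i * A i l) • z i l with hs
  have hws : ∀ l, wt l = vt l • s l := by
    intro l
    rw [hstat l]
    simp only [hs, Finset.smul_sum, smul_smul]
    refine Finset.sum_congr rfl fun i _ => ?_
    rw [← hA i l]
    congr 1
    ring
  have hvne : ∀ l, vt l ≠ 0 := by
    intro l hv
    have hw0 : wt l = 0 := by rw [hws l, hv, zero_smul]
    exact hnzin ⟨0, hn⟩ l (by rw [hw0]; exact inner_zero_left _)
  have hsn : ∀ l, ‖s l‖ = 1 := by
    intro l
    have h1 : |vt l| * ‖s l‖ = |vt l| * 1 := by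
      rw [mul_one]
      conv_rhs => rw [← hbal l, hws l, norm_smul, Real.norm_eq_abs]
    exact mul_left_cancel₀ (abs_ne_zero.mpr (hvne l)) h1
  have hmax : ∀ i l, A i l * (inner ℝ (wt l) (z i l) : ℝ)
      = max 0 (inner ℝ (wt l) (z i l) : ℝ) := by
    intro i l
    rw [hA]
    rcases lt_trichotomy (0:ℝ) (inner ℝ (wt l) (z i l) : ℝ) with h|h|h
    · rw [if_pos h, one_mul, max_eq_right h.le]
    · exact absurd h.symm (hnzin i l)
    · rw [if_neg (not_lt.mpr h.le), zero_mul, max_eq_left h.le]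
  have key : ∑ l, ‖vt l • wt l‖ = ∑ i, lam i := by
    have h1 : ∀ l, ‖vt l • wt l‖
        = ∑ i, lam i * y i * (A i l * (vt l * (inner ℝ (wt l) (z i l) : ℝ))) := by
      intro l
      have h2 : ‖vt l • wt l‖ = (inner ℝ (wt l) (wt l) : ℝ) := by
        rw [norm_smul, Real.norm_eq_abs, ← hbal l, real_inner_self_eq_norm_sq, sq]
      rw [h2]
      conv_lhs => rw [show (inner ℝ (wt l) (wt l) : ℝ) = (inner ℝ (wt l) (vt l • s l) : ℝ) from
        by rw [← hws l]]
      rw [real_inner_smul_right, hs]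
      simp only [inner_sum, real_inner_smul_right]
      rw [Finset.mul_sum]
      refine Finset.sum_congr rfl fun i _ => ?_
      rw [real_inner_comm]
      ring
    calc ∑ l, ‖vt l • wt l‖
        = ∑ l, ∑ i, lam i * y i * (A i l * (vt l * (inner ℝ (wt l) (z i l) : ℝ))) :=
          Finset.sum_congr rfl fun l _ => h1 l
      _ = ∑ i, ∑ l, lam i * y i * (A i l * (vt l * (inner ℝ (wt l) (z i l) : ℝ))) :=
          Finset.sum_comm
      _ = ∑ i, lam i * (y i * ∑ l, vt l * max 0 (inner ℝ (wt l) (z i l) : ℝ)) := by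
          refine Finset.sum_congr rfl fun i _ => ?_
          rw [Finset.mul_sum, Finset.mul_sum]
          refine Finset.sum_congr rfl fun l _ => ?_
          rw [show A i l * (vt l * (inner ℝ (wt l) (z i l) : ℝ))
            = vt l * (A i l * (inner ℝ (wt l) (z i l) : ℝ)) from by ring, hmax]
          ring
      _ = ∑ i, lam i := by
          refine Finset.sum_congr rfl fun i _ => ?_
          by_cases h : y i * ∑ l, vt l * max 0 (inner ℝ (wt l) (z i l) : ℝ) = 1
          · rw [h, mul_one]
          · rw [hcomp i h, zero_mul]
  rw [ge_iff_le, key]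
  have hub : ∑ i, lam i ≤ ∑ l, (inner ℝ (u l) (s l) : ℝ) := by
    have h3 : ∑ l, (inner ℝ (u l) (s l) : ℝ)
        = ∑ i, lam i * (y i * ∑ l, A i l * (inner ℝ (u l) (z i l) : ℝ)) := by
      simp only [hs, inner_sum, real_inner_smul_right]
      rw [Finset.sum_comm]
      refine Finset.sum_congr rfl fun i _ => ?_
      rw [Finset.mul_sum, Finset.mul_sum]
      refine Finset.sum_congr rfl fun l _ => ?_
      ring
    rw [h3]
    calc ∑ i, lam i = ∑ i, lam i * 1 := by simp
      _ ≤ ∑ i, lam i * (y i * ∑ l, A i l * (inner ℝ (u l) (z i l) : ℝ)) :=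
          Finset.sum_le_sum fun i _ => mul_le_mul_of_nonneg_left (hu i) (hlam i)
  refine le_trans hub (Finset.sum_le_sum fun l _ => ?_)
  calc (inner ℝ (u l) (s l) : ℝ) ≤ ‖u l‖ * ‖s l‖ := real_inner_le_norm _ _
    _ = ‖u l‖ := by rw [hsn l, mul_one]
end

section
/- Define Φ(θ; x) = v₁·max(0, ⟨w₁, x⟩) + v₂·max(0, ⟨w₂, x⟩) for θ = (w₁, w₂, v₁, v₂) ∈ ℝ²×ℝ²×ℝ×ℝ. Consider the dataset x₁ = (1, 1/4), x₂ = (−1, 1/4), x₃ = (0, −1) with y₁ = y₂ = y₃ = 1. For all real α ≥ 2 and β ≥ 1, let θ̃ = (w̃₁, w̃₂, ṽ₁, ṽ₂) with w̃₁ = (0, α), ṽ₁ = α, w̃₂ = (0, −β), ṽ₂ = β. Then θ̃ is feasible (Φ(θ̃; x_i) ≥ 1 for i = 1, 2, 3), ⟨w̃_j, x_i⟩ ≠ 0 for all j ∈ {1,2} and i ∈ {1,2,3}, but θ̃ is not a global optimum: there exists θ′ with Φ(θ′; x_i) ≥ 1 for i = 1, 2, 3 and ‖θ′‖ < ‖θ̃‖.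 -/
/-- for the dataset `x₁=(1,1/4)`, `x₂=(−1,1/4)`, `x₃=(0,−1)` with all labels `1`,
and for every `α ≥ 2`, `β ≥ 1`, the point `θ̃` with `w̃₁=(0,α)`, `ṽ₁=α`, `w̃₂=(0,−β)`, `ṽ₂=β` is
feasible, has non-zero inputs to both hidden neurons on every data point, but is not a global
optimum of the max-margin problem. -/
theorem relu_fc_kkt_not_global_optimum (α β : ℝ) (hα : 2 ≤ α) (hβ : 1 ≤ β) :
    (reluNet2 0 α 0 (-β) α β 1 (1/4) ≥ 1
      ∧ reluNet2 0 α 0 (-β) α β (-1) (1/4) ≥ 1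
      ∧ reluNet2 0 α 0 (-β) α β 0 (-1) ≥ 1)
    ∧ (0 * 1 + α * (1/4) ≠ 0 ∧ 0 * (-1) + α * (1/4) ≠ 0 ∧ 0 * 0 + α * (-1) ≠ 0
      ∧ 0 * 1 + (-β) * (1/4) ≠ 0 ∧ 0 * (-1) + (-β) * (1/4) ≠ 0 ∧ 0 * 0 + (-β) * (-1) ≠ 0)
    ∧ ∃ w11 w12 w21 w22 v1 v2 : ℝ,
        reluNet2 w11 w12 w21 w22 v1 v2 1 (1/4) ≥ 1
        ∧ reluNet2 w11 w12 w21 w22 v1 v2 (-1) (1/4) ≥ 1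
        ∧ reluNet2 w11 w12 w21 w22 v1 v2 0 (-1) ≥ 1
        ∧ Real.sqrt (w11 ^ 2 + w12 ^ 2 + w21 ^ 2 + w22 ^ 2 + v1 ^ 2 + v2 ^ 2)
            < Real.sqrt (0 ^ 2 + α ^ 2 + 0 ^ 2 + (-β) ^ 2 + α ^ 2 + β ^ 2) := by
  have hα0 : (0:ℝ) < α := by linarith
  have hβ0 : (0:ℝ) < β := by linarith
  refine ⟨⟨?_, ?_, ?_⟩, ?_, 9/8, -1/2, -9/8, -1/2, 1, 1, ?_, ?_, ?_, ?_⟩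
  · unfold reluNet2
    rw [max_eq_right (by linarith), max_eq_left (by nlinarith)]
    nlinarith
  · unfold reluNet2
    rw [max_eq_right (by linarith), max_eq_left (by nlinarith)]
    nlinarith
  · unfold reluNet2
    rw [max_eq_left (by nlinarith), max_eq_right (by nlinarith)]
    nlinarith
  · refine ⟨?_, ?_, ?_, ?_, ?_, ?_⟩ <;> · intro h; nlinarith
  · unfold reluNet2
    rw [show (9/8 : ℝ) * 1 + -1/2 * (1/4) = 1 by norm_num,
        show (-9/8 : ℝ) * 1 + -1/2 * (1/4) = -5/4 by norm_num]
    norm_num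
  · unfold reluNet2
    rw [show (9/8 : ℝ) * (-1) + -1/2 * (1/4) = -5/4 by norm_num,
        show (-9/8 : ℝ) * (-1) + -1/2 * (1/4) = 1 by norm_num]
    norm_num
  · unfold reluNet2
    norm_num
  · apply Real.sqrt_lt_sqrt (by positivity)
    nlinarith
end

section
/- Define Φ(θ; x) = v₁·max(0, ⟨w, x⁽¹⁾⟩) + v₂·max(0, ⟨w, x⁽²⁾⟩) for θ = (w, v) with w ∈ ℝ², v ∈ ℝ², where for x ∈ ℝ⁴ one sets x⁽¹⁾ = (x[1], x[2]) and x⁽²⁾ = (x[3], x[4]) (a depth-2 convolutional ReLU network with two disjoint patches and shared filter w). Consider the single data point x = (4, 1/√2, −4, 1/√2) with y = 1, and let θ̃ = (w̃, ṽ) with w̃ = (0, 1) and ṽ = (1/√2, 1/√2). Then: (a) Φ(θ̃; x) = 1 and ⟨w̃, x⁽ʲ⁾⟩ ≠ 0 for j = 1, 2; and (b) θ̃ is not a local optimum: for every ε′ ∈ (0, 1) there exists θ′ with ‖θ′ − θ̃‖ ≤ ε′, Φ(θ′; x) ≥ 1, and ‖θ′‖ < ‖θ̃‖ = √2. -/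
/-- Depth-2 convolutional ReLU network with two disjoint patches and shared filter `w ∈ ℝ²`:
`Φ(θ; x) = v₁·max(0,⟨w,(x₁,x₂)⟩) + v₂·max(0,⟨w,(x₃,x₄)⟩)`, with explicit coordinates. -/
def convNet2 (w1 w2 v1 v2 x1 x2 x3 x4 : ℝ) : ℝ :=
  v1 * max 0 (w1 * x1 + w2 * x2) + v2 * max 0 (w1 * x3 + w2 * x4)

lemma key1 (d : ℝ) (h1 : 0 < d) (h2 : d < 1/8) :
    1 ≤ (1 - 2*d^2)^2 * (2 * (1/2) + 8*d^2) := by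
  have hd2 : d^2 < 1/64 := by nlinarith
  nlinarith [mul_pos h1 h1, sq_nonneg (d^2), sq_nonneg (d^3),
    mul_lt_mul_of_pos_left hd2 (mul_pos h1 h1)]

lemma key2 (d : ℝ) (h1 : 0 < d) (h2 : d < 1/8) :
    (1 - 2*d^2)^2 * (3*d^2 + 1 + 2 * (1/2)) < 2 := by
  have hd2 : d^2 < 1/64 := by nlinarith
  nlinarith [mul_pos h1 h1, sq_nonneg (d^2), sq_nonneg (d^3),
    mul_lt_mul_of_pos_left hd2 (mul_pos h1 h1)]

/-- for the single data point `x = (4, 1/√2, −4, 1/√2)` with label `1`, the point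
`θ̃` with `w̃ = (0,1)`, `ṽ = (1/√2, 1/√2)` attains margin exactly `1`, has non-zero inputs to
both hidden neurons, and is not a local optimum of the max-margin problem. -/
theorem conv_relu_kkt_not_local_optimum :
    (convNet2 0 1 (1 / Real.sqrt 2) (1 / Real.sqrt 2) 4 (1 / Real.sqrt 2) (-4) (1 / Real.sqrt 2)
        = 1
      ∧ 0 * 4 + 1 * (1 / Real.sqrt 2) ≠ 0
      ∧ 0 * (-4) + 1 * (1 / Real.sqrt 2) ≠ 0)
    ∧ Real.sqrt (0 ^ 2 + 1 ^ 2 + (1 / Real.sqrt 2) ^ 2 + (1 / Real.sqrt 2) ^ 2) = Real.sqrt 2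
    ∧ ∀ ε' : ℝ, 0 < ε' → ε' < 1 →
        ∃ w1 w2 v1 v2 : ℝ,
          Real.sqrt ((w1 - 0) ^ 2 + (w2 - 1) ^ 2 + (v1 - 1 / Real.sqrt 2) ^ 2
              + (v2 - 1 / Real.sqrt 2) ^ 2) ≤ ε'
          ∧ convNet2 w1 w2 v1 v2 4 (1 / Real.sqrt 2) (-4) (1 / Real.sqrt 2) ≥ 1
          ∧ Real.sqrt (w1 ^ 2 + w2 ^ 2 + v1 ^ 2 + v2 ^ 2) < Real.sqrt 2 := by
  have h2 : (0:ℝ) < Real.sqrt 2 := Real.sqrt_pos.mpr (by norm_num)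
  set s : ℝ := 1 / Real.sqrt 2 with hsdef
  have hspos : 0 < s := by positivity
  have hs2 : s ^ 2 = 1 / 2 := by
    rw [hsdef, div_pow, one_pow, Real.sq_sqrt (by norm_num : (2:ℝ) ≥ 0)]
  have hslt : s < 1 := by nlinarith
  refine ⟨⟨?_, ?_, ?_⟩, ?_, ?_⟩
  · unfold convNet2
    rw [max_eq_right (by nlinarith), max_eq_right (by nlinarith)]
    nlinarith
  · intro h; nlinarith
  · intro h; nlinarith
  · rw [show (0:ℝ) ^ 2 + 1 ^ 2 + s ^ 2 + s ^ 2 = 2 by nlinarith]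
  · intro ε' hε hε1
    set δ : ℝ := ε' / 8 with hδdef
    have hδpos : 0 < δ := by positivity
    have hδlt : δ < 1 / 8 := by rw [hδdef]; linarith
    set lam : ℝ := 1 - 2 * δ ^ 2 with hlamdef
    have hlampos : 0 < lam := by nlinarith
    have hlamle : lam ≤ 1 := by nlinarith
    refine ⟨lam * δ, lam, lam * (s + δ), lam * (s - δ), ?_, ?_, ?_⟩
    · -- distance
      have hd : (lam * δ - 0) ^ 2 + (lam - 1) ^ 2 + (lam * (s + δ) - s) ^ 2
          + (lam * (s - δ) - s) ^ 2 ≤ ε' ^ 2 := by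
        have h1 : lam * (s + δ) - s = lam * δ - 2 * δ ^ 2 * s := by ring
        have h2' : lam * (s - δ) - s = -(lam * δ) - 2 * δ ^ 2 * s := by ring
        rw [h1, h2']
        have hδε : δ = ε' / 8 := hδdef
        nlinarith [sq_nonneg δ, sq_nonneg (lam * δ), sq_nonneg ε', mul_pos hδpos hδpos,
          sq_nonneg (δ * s)]
      calc Real.sqrt ((lam * δ - 0) ^ 2 + (lam - 1) ^ 2 + (lam * (s + δ) - s) ^ 2
            + (lam * (s - δ) - s) ^ 2) ≤ Real.sqrt (ε' ^ 2) := Real.sqrt_le_sqrt hd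
        _ = ε' := Real.sqrt_sq hε.le
    · -- margin
      unfold convNet2
      have ha : lam * δ * 4 + lam * s = lam * (4 * δ + s) := by ring
      have hb : lam * δ * (-4) + lam * s = lam * (s - 4 * δ) := by ring
      rw [ha, hb, max_eq_right (by nlinarith), max_eq_right (by nlinarith)]
      have : lam * (s + δ) * (lam * (4 * δ + s)) + lam * (s - δ) * (lam * (s - 4 * δ))
          = lam ^ 2 * (2 * s ^ 2 + 8 * δ ^ 2) := by ring
      rw [this, hs2, hlamdef]
      exact key1 δ hδpos hδlt
    · -- norm
      have hn : (lam * δ) ^ 2 + lam ^ 2 + (lam * (s + δ)) ^ 2 + (lam * (s - δ)) ^ 2 < 2 := by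
        have : (lam * δ) ^ 2 + lam ^ 2 + (lam * (s + δ)) ^ 2 + (lam * (s - δ)) ^ 2
            = lam ^ 2 * (3 * δ ^ 2 + 1 + 2 * s ^ 2) := by ring
        rw [this, hs2, hlamdef]
        exact key2 δ hδpos hδlt
      exact Real.sqrt_lt_sqrt (by positivity) hn
end

section
/- Let m ≥ 3 be an integer. Define the depth-m diagonal linear network Φ(θ; x) = ∑_{r=1}^2 (∏_{j=1}^m w_j[r])·x[r] for θ = (w₁,…,w_m) ∈ (ℝ²)^m and x ∈ ℝ². Consider the single data point x = (1, 1) with y = 1, and let θ̃ = (w̃₁,…,w̃_m) with w̃_j = (2^{−1/m}, 2^{−1/m}) for all j ∈ [m]. Then: (a) Φ(θ̃; x) = 1; and (b) θ̃ is not a local optimum of minimizing ‖θ‖ subject to Φ(θ; x) ≥ 1: for every δ > 0 there exists θ′ with ‖θ′ − θ̃‖ < δ, Φ(θ′; x) ≥ 1, and ‖θ′‖ < ‖θ̃‖; indeed, for every sufficiently small ε > 0, the point θ′ with w′_j = (((1+ε)/2)^{1/m}, ((1−ε)/2)^{1/m}) for all j satisfies Φ(θ′; x) = 1 and ‖θ′‖²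 < ‖θ̃‖² = 2m·2^{−2/m}. -/
/-- Depth-`m` diagonal linear network with input dimension 2, where `a j` (resp. `b j`) is the
first (resp. second) coordinate of the `j`-th layer weight vector `w_j ∈ ℝ²`:
`Φ(θ; x) = (∏ j, w_j[1])·x[1] + (∏ j, w_j[2])·x[2]`. -/
def diagNetM (m : ℕ) (a b : Fin m → ℝ) (x1 x2 : ℝ) : ℝ :=
  (∏ j, a j) * x1 + (∏ j, b j) * x2

lemma root_pow_eq (m : ℕ) (hm : 0 < m) {u : ℝ} (hu : 0 < u) :
    (u ^ ((1 : ℝ) / m)) ^ m = u := by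
  rw [← Real.rpow_natCast (u ^ ((1 : ℝ) / m)) m, ← Real.rpow_mul hu.le,
    one_div, inv_mul_cancel₀ (by exact_mod_cast hm.ne'), Real.rpow_one]

lemma root_sq_eq (m : ℕ) (hm : 0 < m) {u : ℝ} (hu : 0 < u) :
    (u ^ ((1 : ℝ) / m)) ^ 2 = u ^ ((2 : ℝ) / m) := by
  rw [← Real.rpow_natCast (u ^ ((1 : ℝ) / m)) 2, ← Real.rpow_mul hu.le]
  norm_num
  rw [div_eq_mul_inv, mul_comm]

lemma two_neg_eq (m : ℕ) :
    (2 : ℝ) ^ (-(2 / (m : ℝ))) = ((1 : ℝ) / 2) ^ ((2 : ℝ) / m) := by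
  rw [Real.rpow_neg (by norm_num : (0:ℝ) ≤ 2),
    show (1:ℝ)/2 = 2⁻¹ by norm_num, Real.inv_rpow (by norm_num : (0:ℝ) ≤ 2)]

lemma key_lt (m : ℕ) (hm : 3 ≤ m) {ε : ℝ} (hε : 0 < ε) (hε1 : ε < 1) :
    ((1 + ε) / 2) ^ ((2 : ℝ) / m) + ((1 - ε) / 2) ^ ((2 : ℝ) / m)
      < 2 * (2 : ℝ) ^ (-(2 / (m : ℝ))) := by
  have hm0 : (0 : ℝ) < m := by positivity
  have hp0 : (0 : ℝ) < 2 / m := by positivity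
  have hp1 : (2 : ℝ) / m < 1 := by
    rw [div_lt_one hm0]
    exact_mod_cast by omega
  have hx : ((1 + ε) / 2 : ℝ) ∈ Set.Ici (0 : ℝ) := by
    simp only [Set.mem_Ici]; linarith
  have hy : ((1 - ε) / 2 : ℝ) ∈ Set.Ici (0 : ℝ) := by
    simp only [Set.mem_Ici]; linarith
  have hxy : ((1 + ε) / 2 : ℝ) ≠ (1 - ε) / 2 := by intro h; nlinarith [h]
  have hsc := (Real.strictConcaveOn_rpow hp0 hp1).2 hx hy hxy
    (by norm_num : (0:ℝ) < 1/2) (by norm_num : (0:ℝ) < 1/2)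
    (by norm_num : (1:ℝ)/2 + 1/2 = 1)
  have hmid : ((1:ℝ)/2) • ((1 + ε) / 2) + ((1:ℝ)/2) • ((1 - ε) / 2) = (1:ℝ)/2 := by
    simp only [smul_eq_mul]; ring
  rw [hmid, smul_eq_mul, smul_eq_mul] at hsc
  rw [two_neg_eq]
  linarith

lemma prod_const_fin (m : ℕ) (c : ℝ) : (∏ _j : Fin m, c) = c ^ m := by
  simp

lemma tilde_eq (m : ℕ) (hm : 0 < m) :
    (2 : ℝ) ^ (-(1 / (m : ℝ))) = ((1 : ℝ) / 2) ^ ((1 : ℝ) / m) := by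
  rw [Real.rpow_neg (by norm_num : (0:ℝ) ≤ 2),
    show (1:ℝ)/2 = 2⁻¹ by norm_num, Real.inv_rpow (by norm_num : (0:ℝ) ≤ 2)]

lemma eps_works (m : ℕ) (hm : 3 ≤ m) {ε : ℝ} (hε : 0 < ε) (hε1 : ε < 1) :
    diagNetM m (fun _ => ((1 + ε) / 2) ^ ((1 : ℝ) / m))
        (fun _ => ((1 - ε) / 2) ^ ((1 : ℝ) / m)) 1 1 = 1
    ∧ (∑ _j : Fin m, ((((1 + ε) / 2) ^ ((1 : ℝ) / m)) ^ 2
        + (((1 - ε) / 2) ^ ((1 : ℝ) / m)) ^ 2)) < 2 * m * (2 : ℝ) ^ (-(2 / (m : ℝ))) := by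
  have hm0 : 0 < m := by omega
  have hu : (0:ℝ) < (1 + ε) / 2 := by linarith
  have hv : (0:ℝ) < (1 - ε) / 2 := by linarith
  constructor
  · simp only [diagNetM, Finset.prod_const, Finset.card_univ, Fintype.card_fin, mul_one]
    rw [root_pow_eq m hm0 hu, root_pow_eq m hm0 hv]
    ring
  · rw [Finset.sum_const, Finset.card_univ, Fintype.card_fin, nsmul_eq_mul,
      root_sq_eq m hm0 hu, root_sq_eq m hm0 hv]
    have hk := key_lt m hm hε hε1
    have hmpos : (0:ℝ) < m := by positivity
    nlinarith

/-- for `m ≥ 3` and the single data point `x = (1,1)`, `y = 1`, the point `θ̃`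
with `w̃_j = (2^{-1/m}, 2^{-1/m})` for all `j` attains margin exactly `1` but is not a local
optimum of the max-margin problem; indeed the explicit perturbation
`w′_j = (((1+ε)/2)^{1/m}, ((1−ε)/2)^{1/m})` works for all sufficiently small `ε > 0`. -/
theorem deep_diagonal_kkt_not_local_optimum (m : ℕ) (hm : 3 ≤ m) :
    diagNetM m (fun _ => (2 : ℝ) ^ (-(1 / (m : ℝ)))) (fun _ => (2 : ℝ) ^ (-(1 / (m : ℝ)))) 1 1
        = 1
    ∧ (∑ _j : Fin m, (((2 : ℝ) ^ (-(1 / (m : ℝ)))) ^ 2 + ((2 : ℝ) ^ (-(1 / (m : ℝ)))) ^ 2))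
        = 2 * m * (2 : ℝ) ^ (-(2 / (m : ℝ)))
    ∧ (∀ δ : ℝ, 0 < δ →
        ∃ a' b' : Fin m → ℝ,
          Real.sqrt (∑ j, ((a' j - (2 : ℝ) ^ (-(1 / (m : ℝ)))) ^ 2
              + (b' j - (2 : ℝ) ^ (-(1 / (m : ℝ)))) ^ 2)) < δ
          ∧ diagNetM m a' b' 1 1 ≥ 1
          ∧ (∑ j, ((a' j) ^ 2 + (b' j) ^ 2)) < 2 * m * (2 : ℝ) ^ (-(2 / (m : ℝ))))
    ∧ ∃ ε₀ : ℝ, 0 < ε₀ ∧ ∀ ε : ℝ, 0 < ε → ε < ε₀ →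
        diagNetM m (fun _ => ((1 + ε) / 2) ^ ((1 : ℝ) / m))
            (fun _ => ((1 - ε) / 2) ^ ((1 : ℝ) / m)) 1 1 = 1
        ∧ (∑ _j : Fin m, ((((1 + ε) / 2) ^ ((1 : ℝ) / m)) ^ 2
            + (((1 - ε) / 2) ^ ((1 : ℝ) / m)) ^ 2)) < 2 * m * (2 : ℝ) ^ (-(2 / (m : ℝ))) := by
  have hm0 : 0 < m := by omega
  have hc : ((2:ℝ) ^ (-(1 / (m:ℝ)))) ^ m = 1 / 2 := by
    rw [tilde_eq m hm0]
    exact root_pow_eq m hm0 (by norm_num)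
  have hc2 : ((2:ℝ) ^ (-(1 / (m:ℝ)))) ^ 2 = (2:ℝ) ^ (-(2 / (m:ℝ))) := by
    rw [tilde_eq m hm0, root_sq_eq m hm0 (by norm_num : (0:ℝ) < 1/2), ← two_neg_eq]
  refine ⟨?_, ?_, ?_, 1, one_pos, fun ε hε hε1 => eps_works m hm hε hε1⟩
  · simp only [diagNetM, Finset.prod_const, Finset.card_univ, Fintype.card_fin, mul_one, hc]
    norm_num
  · rw [Finset.sum_const, Finset.card_univ, Fintype.card_fin, nsmul_eq_mul, hc2]
    ring
  · intro δ hδ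
    set c : ℝ := (2:ℝ) ^ (-(1 / (m:ℝ))) with hcdef
    set g : ℝ → ℝ := fun ε => Real.sqrt (∑ _j : Fin m,
      ((((1 + ε) / 2) ^ ((1:ℝ)/m) - c) ^ 2 + (((1 - ε) / 2) ^ ((1:ℝ)/m) - c) ^ 2)) with hgdef
    have hg0 : g 0 = 0 := by
      have h12 : ((1 + (0:ℝ)) / 2) ^ ((1:ℝ)/m) = c := by
        rw [hcdef, tilde_eq m hm0]; norm_num
      have h12' : ((1 - (0:ℝ)) / 2) ^ ((1:ℝ)/m) = c := by
        rw [hcdef, tilde_eq m hm0]; norm_num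
      have hrfl : g 0 = Real.sqrt (∑ _j : Fin m,
          ((((1 + (0:ℝ)) / 2) ^ ((1:ℝ)/m) - c) ^ 2
            + (((1 - (0:ℝ)) / 2) ^ ((1:ℝ)/m) - c) ^ 2)) := rfl
      rw [hrfl, h12, h12']
      simp
    have hgc : ContinuousAt g 0 := by
      have h1 : ContinuousAt (fun ε : ℝ => ((1 + ε) / 2) ^ ((1:ℝ)/m)) 0 := by
        apply ContinuousAt.comp (g := fun t : ℝ => t ^ ((1:ℝ)/m))
        · exact Real.continuousAt_rpow_const _ _ (Or.inl (by norm_num))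
        · fun_prop
      have h2 : ContinuousAt (fun ε : ℝ => ((1 - ε) / 2) ^ ((1:ℝ)/m)) 0 := by
        apply ContinuousAt.comp (g := fun t : ℝ => t ^ ((1:ℝ)/m))
        · exact Real.continuousAt_rpow_const _ _ (Or.inl (by norm_num))
        · fun_prop
      apply Real.continuous_sqrt.continuousAt.comp
      exact tendsto_finset_sum _ (fun j _ =>
        ((h1.sub continuousAt_const).pow 2).add ((h2.sub continuousAt_const).pow 2))
    have hev : ∀ᶠ ε in nhds (0:ℝ), g ε < δ := by
      have := hgc.tendsto
      rw [hg0] at this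
      exact this.eventually_lt_const hδ
    rw [Metric.eventually_nhds_iff] at hev
    obtain ⟨r, hr, hball⟩ := hev
    set ε : ℝ := min r 1 / 2 with hεdef
    have hε : 0 < ε := by positivity
    have hε1 : ε < 1 := by
      have : min r 1 ≤ 1 := min_le_right _ _
      rw [hεdef]; linarith
    have hεr : dist ε 0 < r := by
      rw [Real.dist_eq, sub_zero, abs_of_pos hε, hεdef]
      have : min r 1 ≤ r := min_le_left _ _
      linarith
    obtain ⟨hmargin, hsum⟩ := eps_works m hm hε hε1
    refine ⟨fun _ => ((1 + ε) / 2) ^ ((1:ℝ)/m), fun _ => ((1 - ε) / 2) ^ ((1:ℝ)/m),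
      hball hεr, le_of_eq hmargin.symm, hsum⟩
end

section
/- Define Φ(θ; x) = ∑_{j=1}^4 v_j·max(0, ⟨w_j, x⟩) for θ = (w₁,…,w₄, v). Consider the dataset x₁ = (0, 1), x₂ = (1, 0), x₃ = (0, −1), x₄ = (−1, 0) with y₁ = ⋯ = y₄ = 1, and let θ̃ have w̃_j = x_j and ṽ_j = 1 for every j ∈ [4]. Then the first-layer weights (w̃₁,…,w̃₄) are not a local optimum of the per-layer maximum-margin problem for the first layer at θ̃: for every ε ∈ (0, 1) there exist w′₁,…,w′₄ ∈ ℝ² with ∑_{j=1}^4 ‖w′_j − w̃_j‖² ≤ ε², such that ∑_{j=1}^4 ṽ_j·max(0, ⟨w′_j, x_i⟩) ≥ 1 for all i ∈ [4] and ∑_{j=1}^4 ‖w′_j‖² < ∑_{j=1}^4 ‖w̃_j‖² = 4. -/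
/-- for the dataset `x₁=(0,1), x₂=(1,0), x₃=(0,−1), x₄=(−1,0)` with all labels `1`,
and `θ̃` with `w̃_j = x_j`, `ṽ_j = 1`, the first-layer weights are not a local optimum of the
per-layer max-margin problem for the first layer (second layer frozen at `ṽ`). -/
theorem relu_first_layer_not_local_optimum
    (xs : Fin 4 → Fin 2 → ℝ)
    (hxs : xs = ![![0, 1], ![1, 0], ![0, -1], ![-1, 0]]) :
    (∑ j : Fin 4, ((xs j 0) ^ 2 + (xs j 1) ^ 2)) = 4
    ∧ ∀ ε : ℝ, 0 < ε → ε < 1 →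
        ∃ w' : Fin 4 → Fin 2 → ℝ,
          (∑ j : Fin 4, ((w' j 0 - xs j 0) ^ 2 + (w' j 1 - xs j 1) ^ 2)) ≤ ε ^ 2
          ∧ (∀ i : Fin 4, reluNetK 4 w' (fun _ => 1) (xs i) ≥ 1)
          ∧ (∑ j : Fin 4, ((w' j 0) ^ 2 + (w' j 1) ^ 2))
              < ∑ j : Fin 4, ((xs j 0) ^ 2 + (xs j 1) ^ 2) := by
  subst hxs
  constructor
  · simp [Fin.sum_univ_four]
    norm_num
  · intro ε hε hε1
    set δ : ℝ := ε / 3 with hδ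
    have hδ0 : 0 < δ := by positivity
    have hδ3 : δ < 1 / 3 := by simp only [hδ]; linarith
    refine ⟨![![0, 1 - 2 * δ], ![1, δ], ![0, -1], ![-1, δ]], ?_, ?_, ?_⟩
    · simp [Fin.sum_univ_four]
      nlinarith [sq_nonneg ε]
    · intro i
      fin_cases i <;>
        simp only [reluNetK, Fin.sum_univ_four, Matrix.cons_val_zero, Matrix.cons_val_one,
            Matrix.head_cons, Matrix.cons_val_fin_one, Fin.isValue, one_mul, Matrix.cons_val] <;>
        norm_num <;> (repeat' rw [max_def]) <;> (split_ifs <;> linarith)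
    · simp [Fin.sum_univ_four]
      nlinarith
end
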